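/- arXiv:0704.0081 — 6 statements merged into one kernel-verified Lean document; each statement's English description precedes it below -/
import Mathlib

section
/- Let g be a Lie algebra and let x_0, y_0, x_1, ..., x_n, y_1, ..., y_n be elements of g satisfying: [x_0, y_0] = y_0; [x_0, x_i] = (1 - t_i) x_i; [x_0, y_i] = t_i y_i; [x_i, y_j] = δ_{ij} y_0; [x_i, x_j] = [y_i, y_j] = 0; [y_0, x_j] = [y_0, y_j] = 0 for all i, j in {1,...,n} and scalars t_i. Then the two-tensor r = ξ (x_0 ⊗ y_0 - y_0 ⊗ x_0 + Σ_{i=1}^n (x_i ⊗ y_i - y_i ⊗ x_i)) satisfies the homogeneous classical Yang–Baxter equation [r^{12}, r^{13}] + [r^{12}, r^{23}] + [r^{13}, r^{23}] = 0. -/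
/-!
The Yang–Baxter expression `[r¹², r¹³] + [r¹², r²³] + [r¹³, r²³]` is the diagonal `form r r`
of a (non-symmetric) bilinear form on `A ⊗ A`, for any associative algebra `A`, here `U(g)`.
On pure tensors `form (a ⊗ b) (c ⊗ d) = [a, c] ⊗ b ⊗ d + a ⊗ [b, c] ⊗ d + a ⊗ c ⊗ [b, d]`,
so everything reduces to brackets of the generators.
Writing `r = ξ (w₀ + Σ wᵢ)` with `w₀ = x₀ ∧ y₀`, `wᵢ = xᵢ ∧ yᵢ`:
`form w₀ w₀ = 0` because `[x₀, y₀] = y₀` (the Jordanian r-matrix), `form wᵢ wⱼ = 0` for `i ≠ j`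
because all brackets between `xᵢ, yᵢ` and `xⱼ, yⱼ` vanish, and for each `i` the cross terms
`form w₀ wᵢ + form wᵢ w₀ + form wᵢ wᵢ` cancel by a direct computation from the relations.
-/

open TensorProduct

namespace ClassicalYangBaxter

attribute [local instance] LieRing.ofAssociativeRing

variable {k : Type*} [CommRing k] {A : Type*} [Ring A] [Algebra k A]

noncomputable def leg12 : A ⊗[k] A →ₐ[k] A ⊗[k] (A ⊗[k] A) :=
  Algebra.TensorProduct.map (AlgHom.id k A) Algebra.TensorProduct.includeLeft

noncomputable def leg13 : A ⊗[k] A →ₐ[k] A ⊗[k] (A ⊗[k] A) :=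
  Algebra.TensorProduct.map (AlgHom.id k A) Algebra.TensorProduct.includeRight

noncomputable def leg23 : A ⊗[k] A →ₐ[k] A ⊗[k] (A ⊗[k] A) :=
  Algebra.TensorProduct.includeRight

@[simp] lemma leg12_tmul (a b : A) : leg12 (a ⊗ₜ[k] b) = a ⊗ₜ (b ⊗ₜ 1) := rfl
@[simp] lemma leg13_tmul (a b : A) : leg13 (a ⊗ₜ[k] b) = a ⊗ₜ ((1 : A) ⊗ₜ b) := rfl
@[simp] lemma leg23_tmul (a b : A) : leg23 (a ⊗ₜ[k] b) = (1 : A) ⊗ₜ (a ⊗ₜ[k] b) := rfl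

noncomputable def form : A ⊗[k] A →ₗ[k] A ⊗[k] A →ₗ[k] A ⊗[k] (A ⊗[k] A) :=
  LinearMap.mk₂ k
    (fun r s => ⁅leg12 r, leg13 s⁆ + ⁅leg12 r, leg23 s⁆ + ⁅leg13 r, leg23 s⁆)
    (fun r r' s => by simp only [map_add, add_lie]; abel)
    (fun c r s => by
      simp only [map_smul, Ring.lie_def, smul_mul_assoc, mul_smul_comm, ← smul_sub, smul_add])
    (fun r s s' => by simp only [map_add, lie_add]; abel)
    (fun c r s => by simp only [map_smul, lie_smul, smul_add])

lemma form_apply (r s : A ⊗[k] A) :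
    form r s = ⁅leg12 r, leg13 s⁆ + ⁅leg12 r, leg23 s⁆ + ⁅leg13 r, leg23 s⁆ := rfl

lemma form_self (r : A ⊗[k] A) :
    form r r = (leg12 r * leg13 r - leg13 r * leg12 r) + (leg12 r * leg23 r - leg23 r * leg12 r)
      + (leg13 r * leg23 r - leg23 r * leg13 r) := rfl

lemma form_tmul_tmul (a b c d : A) :
    form (a ⊗ₜ[k] b) (c ⊗ₜ[k] d) =
      ⁅a, c⁆ ⊗ₜ (b ⊗ₜ d) + a ⊗ₜ (⁅b, c⁆ ⊗ₜ d) + a ⊗ₜ (c ⊗ₜ ⁅b, d⁆) := by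
  simp only [form_apply, leg12_tmul, leg13_tmul, leg23_tmul, Ring.lie_def,
    Algebra.TensorProduct.tmul_mul_tmul, mul_one, one_mul, sub_tmul, tmul_sub]

def wedge (a b : A) : A ⊗[k] A := a ⊗ₜ b - b ⊗ₜ a

lemma form_wedge_wedge (a b c d : A) :
    form (wedge (k := k) a b) (wedge c d) =
      form (a ⊗ₜ b) (c ⊗ₜ d) - form (b ⊗ₜ a) (c ⊗ₜ d)
        - (form (a ⊗ₜ b) (d ⊗ₜ c) - form (b ⊗ₜ a) (d ⊗ₜ c)) := by
  simp only [wedge, map_sub, LinearMap.sub_apply]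

lemma form_wedge_wedge_eq_zero_of_lie_eq_zero {p q u v : A} (hpu : ⁅p, u⁆ = 0)
    (hpv : ⁅p, v⁆ = 0) (hqu : ⁅q, u⁆ = 0) (hqv : ⁅q, v⁆ = 0) :
    form (wedge (k := k) p q) (wedge u v) = 0 := by
  simp only [form_wedge_wedge, form_tmul_tmul, hpu, hpv, hqu, hqv, zero_tmul, tmul_zero,
    add_zero, sub_self]

lemma form_wedge_self_eq_zero_of_lie_eq {e f : A} (hef : ⁅e, f⁆ = f) :
    form (wedge (k := k) e f) (wedge e f) = 0 := by
  have hfe : ⁅f, e⁆ = -f := by rw [← lie_skew, hef]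
  simp only [form_wedge_wedge, form_tmul_tmul, hef, hfe, lie_self, zero_tmul, tmul_zero,
    neg_tmul, tmul_neg]
  abel

lemma form_wedge_cross_terms_eq_zero {e f a b : A} (t : k) (hea : ⁅e, a⁆ = (1 - t) • a)
    (heb : ⁅e, b⁆ = t • b) (hab : ⁅a, b⁆ = f) (hfa : ⁅f, a⁆ = 0) (hfb : ⁅f, b⁆ = 0) :
    form (wedge (k := k) e f) (wedge a b) + form (wedge a b) (wedge e f)
      + form (wedge a b) (wedge a b) = 0 := by
  have hae : ⁅a, e⁆ = -((1 - t) • a) := by rw [← lie_skew, hea]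
  have hbe : ⁅b, e⁆ = -(t • b) := by rw [← lie_skew, heb]
  have hba : ⁅b, a⁆ = -f := by rw [← lie_skew, hab]
  have haf : ⁅a, f⁆ = 0 := by rw [← lie_skew, hfa, neg_zero]
  have hbf : ⁅b, f⁆ = 0 := by rw [← lie_skew, hfb, neg_zero]
  simp only [form_wedge_wedge, form_tmul_tmul, hea, heb, hab, hfa, hfb, hae, hbe, hba,
    haf, hbf, lie_self, zero_tmul, tmul_zero, neg_tmul, tmul_neg, ← smul_tmul', tmul_smul]
  module

lemma form_jordanian_eq_zero {ι : Type*} [Fintype ι] [DecidableEq ι] (t : ι → k)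
    {e f : A} {a b : ι → A} (hef : ⁅e, f⁆ = f) (hea : ∀ i, ⁅e, a i⁆ = (1 - t i) • a i)
    (heb : ∀ i, ⁅e, b i⁆ = t i • b i) (hab : ∀ i j, ⁅a i, b j⁆ = if i = j then f else 0)
    (haa : ∀ i j, ⁅a i, a j⁆ = 0) (hbb : ∀ i j, ⁅b i, b j⁆ = 0)
    (hfa : ∀ j, ⁅f, a j⁆ = 0) (hfb : ∀ j, ⁅f, b j⁆ = 0) :
    form (wedge (k := k) e f + ∑ i, wedge (a i) (b i))
      (wedge e f + ∑ i, wedge (a i) (b i)) = 0 := by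
  have hdiag : ∀ j, ∑ i, form (wedge (k := k) (a i) (b i)) (wedge (a j) (b j))
      = form (wedge (a j) (b j)) (wedge (a j) (b j)) := by
    intro j
    refine Finset.sum_eq_single j (fun i _ hij => ?_) (by simp)
    refine form_wedge_wedge_eq_zero_of_lie_eq_zero (haa i j) ?_ ?_ (hbb i j)
    · rw [hab, if_neg hij]
    · rw [← lie_skew, hab, if_neg hij.symm, neg_zero]
  simp only [map_add, map_sum, LinearMap.add_apply, LinearMap.sum_apply, hdiag,
    form_wedge_self_eq_zero_of_lie_eq hef, zero_add]
  rw [← Finset.sum_add_distrib]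
  refine Finset.sum_eq_zero fun i _ => ?_
  rw [add_left_comm, ← add_assoc]
  exact form_wedge_cross_terms_eq_zero (t i) (hea i) (heb i) (by rw [hab, if_pos rfl])
    (hfa i) (hfb i)

lemma form_map_jordanian_eq_zero {L : Type*} [LieRing L] [LieAlgebra k L] (φ : L →ₗ⁅k⁆ A)
    {ι : Type*} [Fintype ι] [DecidableEq ι] (t : ι → k)
    {e f : L} {a b : ι → L} (hef : ⁅e, f⁆ = f) (hea : ∀ i, ⁅e, a i⁆ = (1 - t i) • a i)
    (heb : ∀ i, ⁅e, b i⁆ = t i • b i) (hab : ∀ i j, ⁅a i, b j⁆ = if i = j then f else 0)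
    (haa : ∀ i j, ⁅a i, a j⁆ = 0) (hbb : ∀ i j, ⁅b i, b j⁆ = 0)
    (hfa : ∀ j, ⁅f, a j⁆ = 0) (hfb : ∀ j, ⁅f, b j⁆ = 0) :
    form (wedge (k := k) (φ e) (φ f) + ∑ i, wedge (φ (a i)) (φ (b i)))
      (wedge (φ e) (φ f) + ∑ i, wedge (φ (a i)) (φ (b i))) = 0 :=
  form_jordanian_eq_zero t (by rw [← φ.map_lie, hef])
    (fun i => by rw [← φ.map_lie, hea, map_smul]) (fun i => by rw [← φ.map_lie, heb, map_smul])
    (fun i j => by rw [← φ.map_lie, hab, apply_ite φ, map_zero])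
    (fun i j => by rw [← φ.map_lie, haa, map_zero]) (fun i j => by rw [← φ.map_lie, hbb, map_zero])
    (fun j => by rw [← φ.map_lie, hfa, map_zero]) (fun j => by rw [← φ.map_lie, hfb, map_zero])

end ClassicalYangBaxter

open ClassicalYangBaxter

/-- An r-matrix of Jordanian type
`r = ξ (x₀ ∧ y₀ + Σ_{i=1}^n x_i ∧ y_i)` (with `x ∧ y = x ⊗ y - y ⊗ x`) built from elements
satisfying the relations (2.8) of the paper satisfies the homogeneous classical
Yang–Baxter equation in `U(g)^{⊗3}`. -/
theorem jordanian_type_rmatrix_cybe {k : Type*} [Field k] {g : Type*} [LieRing g]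
    [LieAlgebra k g] (n : ℕ) (ξ : k) (t : Fin n → k) (x₀ y₀ : g) (x y : Fin n → g)
    (h00 : ⁅x₀, y₀⁆ = y₀)
    (h0x : ∀ i, ⁅x₀, x i⁆ = (1 - t i) • x i)
    (h0y : ∀ i, ⁅x₀, y i⁆ = t i • y i)
    (hxy : ∀ i j, ⁅x i, y j⁆ = if i = j then y₀ else 0)
    (hxx : ∀ i j, ⁅x i, x j⁆ = 0)
    (hyy : ∀ i j, ⁅y i, y j⁆ = 0)
    (hy0x : ∀ j, ⁅y₀, x j⁆ = 0)
    (hy0y : ∀ j, ⁅y₀, y j⁆ = 0) :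
    let U := UniversalEnvelopingAlgebra k g
    let ι : g → U := fun v => UniversalEnvelopingAlgebra.ι k v
    let r12 : U ⊗[k] (U ⊗[k] U) := ξ •
      (ι x₀ ⊗ₜ[k] (ι y₀ ⊗ₜ[k] 1) - ι y₀ ⊗ₜ[k] (ι x₀ ⊗ₜ[k] 1) +
        ∑ i, (ι (x i) ⊗ₜ[k] (ι (y i) ⊗ₜ[k] 1) - ι (y i) ⊗ₜ[k] (ι (x i) ⊗ₜ[k] 1)))
    let r13 : U ⊗[k] (U ⊗[k] U) := ξ •
      (ι x₀ ⊗ₜ[k] ((1 : U) ⊗ₜ[k] ι y₀) - ι y₀ ⊗ₜ[k] ((1 : U) ⊗ₜ[k] ι x₀) +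
        ∑ i, (ι (x i) ⊗ₜ[k] ((1 : U) ⊗ₜ[k] ι (y i)) -
          ι (y i) ⊗ₜ[k] ((1 : U) ⊗ₜ[k] ι (x i))))
    let r23 : U ⊗[k] (U ⊗[k] U) := ξ •
      ((1 : U) ⊗ₜ[k] (ι x₀ ⊗ₜ[k] ι y₀) - (1 : U) ⊗ₜ[k] (ι y₀ ⊗ₜ[k] ι x₀) +
        ∑ i, ((1 : U) ⊗ₜ[k] (ι (x i) ⊗ₜ[k] ι (y i)) -
          (1 : U) ⊗ₜ[k] (ι (y i) ⊗ₜ[k] ι (x i))))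
    (r12 * r13 - r13 * r12) + (r12 * r23 - r23 * r12) + (r13 * r23 - r23 * r13) = 0 := by
  intro U ι r12 r13 r23
  let r : U ⊗[k] U := ξ • (wedge (ι x₀) (ι y₀) + ∑ i, wedge (ι (x i)) (ι (y i)))
  have h12 : r12 = leg12 r := by
    simp only [r, wedge, map_smul, map_add, map_sum, map_sub, leg12_tmul]; rfl
  have h13 : r13 = leg13 r := by
    simp only [r, wedge, map_smul, map_add, map_sum, map_sub, leg13_tmul]; rfl
  have h23 : r23 = leg23 r := by
    simp only [r, wedge, map_smul, map_add, map_sum, map_sub, leg23_tmul]; rfl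
  rw [h12, h13, h23, ← form_self, map_smul, LinearMap.map_smul₂,
    form_map_jordanian_eq_zero (UniversalEnvelopingAlgebra.ι k) t h00 h0x h0y hxy hxx hyy hy0x
      hy0y, smul_zero, smul_zero]
end

section
/- In the complexified Lorentz algebra with generators H_1, E_{1±}, H_2, E_{2±} satisfying [H_k, E_{k±}] = ± E_{k±}, [E_{k+}, E_{k-}] = 2 H_k for k = 1, 2, and all brackets between index-1 and index-2 generators vanishing (so the algebra is sl(2) ⊕ sl(2)), the element r'_3 = 2(β + iα)(E_{1+} ⊗ E_{1-} - E_{1-} ⊗ E_{1+}) + 2(β - iα)(E_{2+} ⊗ E_{2-} - E_{2-} ⊗ E_{2+}) satisfies the modified classical Yang–Baxter equation: [r^{12}, r^{13}] + [r^{12}, r^{23}] + [r^{13}, r^{23}] is an invariant element of the triple tensor power (i.e., it is annihilated by the adjoint action of every element of the Lie algebra). -/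
/-!
For a single wedge `e ∧ f`, the classical Yang–Baxter expression
`[r¹², r¹³] + [r¹², r²³] + [r¹³, r²³]` is the totally antisymmetrised tensor `⁅e, f⁆ ∧ e ∧ f`.
For `r'₃` the mixed terms between the two commuting `sl(2)` summands vanish, so the expression is
a combination of `H₁ ∧ E₁₊ ∧ E₁₋` and `H₂ ∧ E₂₊ ∧ E₂₋`. The operator `⁅Δ⁽²⁾ x, -⁆` acts on
`ι u ⊗ ι v ⊗ ι w` as the derivation `ad x` in each slot, and on `h ∧ e ∧ f` this gives zero both
for `x` in the same `sl(2)` (where `ad x` is traceless on `span {h, e, f}`) and for `x`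
commuting with `e` and `f`. Finally, `x ↦ Δ⁽²⁾ x` is a Lie homomorphism, so the elements `x`
with `⁅Δ⁽²⁾ x, C⁆ = 0` form a Lie subalgebra and it suffices to check the generators.
-/

open TensorProduct

section Commutator

variable {R A B : Type*} [CommRing R] [Ring A] [Ring B] [Algebra R A] [Algebra R B]

theorem lie_tmul_tmul_of_commute_right (a a' : A) {b b' : B} (h : Commute b b') :
    ⁅a ⊗ₜ[R] b, a' ⊗ₜ[R] b'⁆ = ⁅a, a'⁆ ⊗ₜ[R] (b * b') := by
  simp only [Ring.lie_def, Algebra.TensorProduct.tmul_mul_tmul, h.eq, sub_tmul]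

theorem lie_tmul_tmul_of_commute_left {a a' : A} (h : Commute a a') (b b' : B) :
    ⁅a ⊗ₜ[R] b, a' ⊗ₜ[R] b'⁆ = (a * a') ⊗ₜ[R] ⁅b, b'⁆ := by
  simp only [Ring.lie_def, Algebra.TensorProduct.tmul_mul_tmul, h.eq, tmul_sub]

end Commutator

theorem lie_eq_zero_comm {L : Type*} [LieRing L] {x y : L} : ⁅x, y⁆ = 0 ↔ ⁅y, x⁆ = 0 := by
  rw [← lie_skew, neg_eq_zero]

theorem LieHom.lie_eq_zero_of_mem_lieSpan {R L L' : Type*} [CommRing R] [LieRing L]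
    [LieAlgebra R L] [LieRing L'] [LieAlgebra R L'] (φ : L →ₗ⁅R⁆ L') {s : Set L} {c : L'}
    (hs : ∀ x ∈ s, ⁅φ x, c⁆ = 0) {x : L} (hx : x ∈ LieSubalgebra.lieSpan R L s) :
    ⁅φ x, c⁆ = 0 := by
  induction hx using LieSubalgebra.lieSpan_induction with
  | mem x hx => exact hs x hx
  | zero => simp
  | add x y _ _ hx hy => simp [hx, hy]
  | smul t x _ hx => simp [hx]
  | lie x y _ _ hx hy => simp [hx, hy]

namespace YangBaxter

variable {R : Type*} [CommRing R] {L : Type*} [LieRing L] [LieAlgebra R L]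

local notation "𝓤" => UniversalEnvelopingAlgebra R L
local notation "𝓤³" => 𝓤 ⊗[R] (𝓤 ⊗[R] 𝓤)

open UniversalEnvelopingAlgebra (ι)

/- The commutator Lie ring is put on `𝓤³` only: as an instance on `𝓤` it would make
`LieAlgebra.toModule` the `Module R 𝓤` used to form the tensor products, which agrees with the
one in `Algebra.TensorProduct` only up to unfolding, and `simp` then fails to apply `smul_lie`.
For the same reason `tmul₃` writes `ι` as a linear map through `mkAlgHom`, since
`(ι R).toLinearMap` needs that instance. -/
noncomputable instance : LieRing 𝓤³ := LieRing.ofAssociativeRing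

section Definitions

variable (R)

noncomputable def tmul₃ : L →ₗ[R] L →ₗ[R] L →ₗ[R] 𝓤³ :=
  let ιₗ := (UniversalEnvelopingAlgebra.mkAlgHom R L).toLinearMap ∘ₗ TensorAlgebra.ι R
  (LinearMap.llcomp R L (𝓤 ⊗[R] 𝓤) 𝓤³).compl₁₂ ((TensorProduct.mk R 𝓤 (𝓤 ⊗[R] 𝓤)) ∘ₗ ιₗ)
    ((TensorProduct.mk R 𝓤 𝓤).compl₁₂ ιₗ ιₗ)

noncomputable def wedge₃ (x y z : L) : 𝓤³ :=
  tmul₃ R x y z - tmul₃ R x z y - tmul₃ R y x z + tmul₃ R y z x + tmul₃ R z x y - tmul₃ R z y x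

noncomputable def wedge₁₂ (a b : L) : 𝓤³ :=
  ι R a ⊗ₜ[R] (ι R b ⊗ₜ[R] 1) - ι R b ⊗ₜ[R] (ι R a ⊗ₜ[R] 1)

noncomputable def wedge₁₃ (a b : L) : 𝓤³ :=
  ι R a ⊗ₜ[R] ((1 : 𝓤) ⊗ₜ[R] ι R b) - ι R b ⊗ₜ[R] ((1 : 𝓤) ⊗ₜ[R] ι R a)

noncomputable def wedge₂₃ (a b : L) : 𝓤³ :=
  (1 : 𝓤) ⊗ₜ[R] (ι R a ⊗ₜ[R] ι R b) - (1 : 𝓤) ⊗ₜ[R] (ι R b ⊗ₜ[R] ι R a)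

variable (L) in
noncomputable def iteratedCoproduct : L →ₗ⁅R⁆ 𝓤³ where
  toFun x := ι R x ⊗ₜ[R] ((1 : 𝓤) ⊗ₜ[R] (1 : 𝓤)) + (1 : 𝓤) ⊗ₜ[R] (ι R x ⊗ₜ[R] (1 : 𝓤)) +
    (1 : 𝓤) ⊗ₜ[R] ((1 : 𝓤) ⊗ₜ[R] ι R x)
  map_add' x y := by simp only [map_add, add_tmul, tmul_add]; abel
  map_smul' c x := by simp only [map_smul, ← smul_tmul', tmul_smul, smul_add, RingHom.id_apply]
  map_lie' {x y} := by
    simp only [lie_add, add_lie, LieHom.map_lie, lie_tmul_tmul_of_commute_right,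
      lie_tmul_tmul_of_commute_left, Commute.one_left, Commute.one_right, Commute.refl,
      Commute.lie_eq, tmul_zero, zero_tmul, Algebra.TensorProduct.tmul_mul_tmul, one_mul, mul_one]
    abel

end Definitions

theorem tmul₃_apply (x y z : L) : tmul₃ R x y z = ι R x ⊗ₜ[R] (ι R y ⊗ₜ[R] ι R z) := rfl

theorem lie_wedge₁₂_wedge₁₃ (a b c d : L) :
    ⁅wedge₁₂ R a b, wedge₁₃ R c d⁆ =
      tmul₃ R ⁅a, c⁆ b d - tmul₃ R ⁅a, d⁆ b c - tmul₃ R ⁅b, c⁆ a d + tmul₃ R ⁅b, d⁆ a c := by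
  simp only [wedge₁₂, wedge₁₃, sub_lie, lie_sub, tmul₃_apply, LieHom.map_lie,
    lie_tmul_tmul_of_commute_right, Commute.one_left, Commute.one_right, Commute.tmul,
    Algebra.TensorProduct.tmul_mul_tmul, one_mul, mul_one]
  abel

theorem lie_wedge₁₂_wedge₂₃ (a b c d : L) :
    ⁅wedge₁₂ R a b, wedge₂₃ R c d⁆ =
      tmul₃ R a ⁅b, c⁆ d - tmul₃ R a ⁅b, d⁆ c - tmul₃ R b ⁅a, c⁆ d + tmul₃ R b ⁅a, d⁆ c := by
  simp only [wedge₁₂, wedge₂₃, sub_lie, lie_sub, tmul₃_apply, LieHom.map_lie,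
    lie_tmul_tmul_of_commute_right, lie_tmul_tmul_of_commute_left, Commute.one_left,
    Commute.one_right, one_mul, mul_one]
  abel

theorem lie_wedge₁₃_wedge₂₃ (a b c d : L) :
    ⁅wedge₁₃ R a b, wedge₂₃ R c d⁆ =
      tmul₃ R a c ⁅b, d⁆ - tmul₃ R a d ⁅b, c⁆ - tmul₃ R b c ⁅a, d⁆ + tmul₃ R b d ⁅a, c⁆ := by
  simp only [wedge₁₃, wedge₂₃, sub_lie, lie_sub, tmul₃_apply, LieHom.map_lie,
    lie_tmul_tmul_of_commute_left, Commute.one_left, Commute.one_right, one_mul, mul_one]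
  abel

theorem cybe_wedge (e f : L) :
    ⁅wedge₁₂ R e f, wedge₁₃ R e f⁆ + ⁅wedge₁₂ R e f, wedge₂₃ R e f⁆ +
      ⁅wedge₁₃ R e f, wedge₂₃ R e f⁆ = wedge₃ R ⁅e, f⁆ e f := by
  simp only [lie_wedge₁₂_wedge₁₃, lie_wedge₁₂_wedge₂₃, lie_wedge₁₃_wedge₂₃, lie_self, map_zero,
    LinearMap.zero_apply, ← lie_skew f e, map_neg, LinearMap.neg_apply, wedge₃]
  abel

theorem cybe_smul_wedge_add_smul_wedge (a b : R) {e₁ f₁ e₂ f₂ : L}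
    (hee : ⁅e₁, e₂⁆ = 0) (hef : ⁅e₁, f₂⁆ = 0) (hfe : ⁅f₁, e₂⁆ = 0) (hff : ⁅f₁, f₂⁆ = 0) :
    let r₁₂ := a • wedge₁₂ R e₁ f₁ + b • wedge₁₂ R e₂ f₂
    let r₁₃ := a • wedge₁₃ R e₁ f₁ + b • wedge₁₃ R e₂ f₂
    let r₂₃ := a • wedge₂₃ R e₁ f₁ + b • wedge₂₃ R e₂ f₂
    ⁅r₁₂, r₁₃⁆ + ⁅r₁₂, r₂₃⁆ + ⁅r₁₃, r₂₃⁆ =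
      (a * a) • wedge₃ R ⁅e₁, f₁⁆ e₁ f₁ + (b * b) • wedge₃ R ⁅e₂, f₂⁆ e₂ f₂ := by
  intro r₁₂ r₁₃ r₂₃
  simp only [r₁₂, r₁₃, r₂₃, lie_add, add_lie, lie_smul, smul_lie]
  rw [← cybe_wedge, ← cybe_wedge]
  simp only [lie_wedge₁₂_wedge₁₃ e₁ f₁ e₂ f₂, lie_wedge₁₂_wedge₁₃ e₂ f₂ e₁ f₁,
    lie_wedge₁₂_wedge₂₃ e₁ f₁ e₂ f₂, lie_wedge₁₂_wedge₂₃ e₂ f₂ e₁ f₁,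
    lie_wedge₁₃_wedge₂₃ e₁ f₁ e₂ f₂, lie_wedge₁₃_wedge₂₃ e₂ f₂ e₁ f₁,
    hee, hef, hfe, hff, lie_eq_zero_comm.mp hee, lie_eq_zero_comm.mp hef,
    lie_eq_zero_comm.mp hfe, lie_eq_zero_comm.mp hff, map_zero, LinearMap.zero_apply]
  module

theorem lie_iteratedCoproduct_tmul₃ (x u v w : L) :
    ⁅iteratedCoproduct R L x, tmul₃ R u v w⁆ =
      tmul₃ R ⁅x, u⁆ v w + tmul₃ R u ⁅x, v⁆ w + tmul₃ R u v ⁅x, w⁆ := by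
  simp only [iteratedCoproduct, LieHom.coe_mk, add_lie, tmul₃_apply, LieHom.map_lie,
    lie_tmul_tmul_of_commute_right, lie_tmul_tmul_of_commute_left, Commute.one_left,
    Commute.tmul, Algebra.TensorProduct.tmul_mul_tmul, one_mul]

theorem lie_iteratedCoproduct_wedge₃ (x u v w : L) :
    ⁅iteratedCoproduct R L x, wedge₃ R u v w⁆ =
      wedge₃ R ⁅x, u⁆ v w + wedge₃ R u ⁅x, v⁆ w + wedge₃ R u v ⁅x, w⁆ := by
  simp only [wedge₃, lie_add, lie_sub, lie_iteratedCoproduct_tmul₃]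
  abel

theorem lie_iteratedCoproduct_wedge₃_eq_zero_of_lie_eq_zero {x e f : L} (he : ⁅x, e⁆ = 0)
    (hf : ⁅x, f⁆ = 0) : ⁅iteratedCoproduct R L x, wedge₃ R ⁅e, f⁆ e f⁆ = 0 := by
  have hef : ⁅x, ⁅e, f⁆⁆ = 0 := by rw [leibniz_lie, he, hf, zero_lie, lie_zero, add_zero]
  rw [lie_iteratedCoproduct_wedge₃, hef, he, hf]
  simp only [wedge₃, map_zero, LinearMap.zero_apply]
  abel

theorem lie_iteratedCoproduct_wedge₃_eq_zero_of_mem {h e f : L} (c : R)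
    (he : ⁅h, e⁆ = e) (hf : ⁅h, f⁆ = -f) (hef : ⁅e, f⁆ = c • h) {x : L}
    (hx : x ∈ ({h, e, f} : Set L)) :
    ⁅iteratedCoproduct R L x, wedge₃ R ⁅e, f⁆ e f⁆ = 0 := by
  have heh : ⁅e, h⁆ = -e := by rw [← lie_skew, he]
  have hfh : ⁅f, h⁆ = f := by rw [← lie_skew, hf, neg_neg]
  have hfe : ⁅f, e⁆ = -(c • h) := by rw [← lie_skew, hef]
  rcases hx with rfl | rfl | rfl <;>
    rw [lie_iteratedCoproduct_wedge₃] <;>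
    simp only [hef, lie_smul, he, hf, heh, hfh, hfe, lie_self, wedge₃, map_zero, map_neg,
      map_smul, LinearMap.zero_apply, LinearMap.neg_apply, LinearMap.smul_apply] <;>
    module

end YangBaxter

open YangBaxter

theorem lorentz_r3prime_mcybe_general {g : Type*} [LieRing g] [LieAlgebra ℂ g]
    (α β : ℂ) (H₁ E₁p E₁m H₂ E₂p E₂m : g)
    (h1 : ⁅H₁, E₁p⁆ = E₁p) (h2 : ⁅H₁, E₁m⁆ = -E₁m) (h3 : ⁅E₁p, E₁m⁆ = (2 : ℂ) • H₁)
    (h4 : ⁅H₂, E₂p⁆ = E₂p) (h5 : ⁅H₂, E₂m⁆ = -E₂m) (h6 : ⁅E₂p, E₂m⁆ = (2 : ℂ) • H₂)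
    (c2 : ⁅H₁, E₂p⁆ = 0) (c3 : ⁅H₁, E₂m⁆ = 0)
    (c4 : ⁅E₁p, H₂⁆ = 0) (c5 : ⁅E₁m, H₂⁆ = 0)
    (c6 : ⁅E₁p, E₂p⁆ = 0) (c7 : ⁅E₁p, E₂m⁆ = 0)
    (c8 : ⁅E₁m, E₂p⁆ = 0) (c9 : ⁅E₁m, E₂m⁆ = 0) :
    let U := UniversalEnvelopingAlgebra ℂ g
    let ι : g → U := fun v => UniversalEnvelopingAlgebra.ι ℂ v
    let w12 : g → g → U ⊗[ℂ] (U ⊗[ℂ] U) := fun a b =>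
      ι a ⊗ₜ[ℂ] (ι b ⊗ₜ[ℂ] 1) - ι b ⊗ₜ[ℂ] (ι a ⊗ₜ[ℂ] 1)
    let w13 : g → g → U ⊗[ℂ] (U ⊗[ℂ] U) := fun a b =>
      ι a ⊗ₜ[ℂ] ((1 : U) ⊗ₜ[ℂ] ι b) - ι b ⊗ₜ[ℂ] ((1 : U) ⊗ₜ[ℂ] ι a)
    let w23 : g → g → U ⊗[ℂ] (U ⊗[ℂ] U) := fun a b =>
      (1 : U) ⊗ₜ[ℂ] (ι a ⊗ₜ[ℂ] ι b) - (1 : U) ⊗ₜ[ℂ] (ι b ⊗ₜ[ℂ] ι a)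
    let r12 := (2 * (β + Complex.I * α)) • w12 E₁p E₁m +
      (2 * (β - Complex.I * α)) • w12 E₂p E₂m
    let r13 := (2 * (β + Complex.I * α)) • w13 E₁p E₁m +
      (2 * (β - Complex.I * α)) • w13 E₂p E₂m
    let r23 := (2 * (β + Complex.I * α)) • w23 E₁p E₁m +
      (2 * (β - Complex.I * α)) • w23 E₂p E₂m
    let C := (r12 * r13 - r13 * r12) + (r12 * r23 - r23 * r12) + (r13 * r23 - r23 * r13)
    ∀ x ∈ LieSubalgebra.lieSpan ℂ g ({H₁, E₁p, E₁m, H₂, E₂p, E₂m} : Set g),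
      (ι x ⊗ₜ[ℂ] ((1 : U) ⊗ₜ[ℂ] (1 : U)) + (1 : U) ⊗ₜ[ℂ] (ι x ⊗ₜ[ℂ] (1 : U)) +
          (1 : U) ⊗ₜ[ℂ] ((1 : U) ⊗ₜ[ℂ] ι x)) * C -
        C * (ι x ⊗ₜ[ℂ] ((1 : U) ⊗ₜ[ℂ] (1 : U)) + (1 : U) ⊗ₜ[ℂ] (ι x ⊗ₜ[ℂ] (1 : U)) +
          (1 : U) ⊗ₜ[ℂ] ((1 : U) ⊗ₜ[ℂ] ι x)) = 0 := by
  intro U ι w12 w13 w23 r12 r13 r23 C x hx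
  have hC : C = _ := cybe_smul_wedge_add_smul_wedge _ _ c6 c7 c8 c9
  change ⁅iteratedCoproduct ℂ g x, C⁆ = 0
  refine (iteratedCoproduct ℂ g).lie_eq_zero_of_mem_lieSpan (fun z hz => ?_) hx
  have sl₁ := lie_iteratedCoproduct_wedge₃_eq_zero_of_mem (x := z) _ h1 h2 h3
  have sl₂ := lie_iteratedCoproduct_wedge₃_eq_zero_of_mem (x := z) _ h4 h5 h6
  have comm {e f : g} (he : ⁅z, e⁆ = 0) (hf : ⁅z, f⁆ = 0) :=
    lie_iteratedCoproduct_wedge₃_eq_zero_of_lie_eq_zero (R := ℂ) he hf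
  rw [hC, lie_add, lie_smul, lie_smul]
  rcases hz with rfl | rfl | rfl | rfl | rfl | rfl
  · simp [sl₁, comm c2 c3]
  · simp [sl₁, comm c6 c7]
  · simp [sl₁, comm c8 c9]
  · simp [sl₂, comm (lie_eq_zero_comm.mp c4) (lie_eq_zero_comm.mp c5)]
  · simp [sl₂, comm (lie_eq_zero_comm.mp c6) (lie_eq_zero_comm.mp c8)]
  · simp [sl₂, comm (lie_eq_zero_comm.mp c7) (lie_eq_zero_comm.mp c9)]

/-- In the complexified Lorentz algebra `sl(2) ⊕ sl(2)` with generators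
`H₁, E₁±, H₂, E₂±`, the element
`r'₃ = 2(β+iα) E₁₊ ∧ E₁₋ + 2(β-iα) E₂₊ ∧ E₂₋` satisfies the modified classical
Yang–Baxter equation: the Schouten expression `[r¹²,r¹³] + [r¹²,r²³] + [r¹³,r²³]` is
invariant, i.e. it commutes with `Δ⁽²⁾(x) = x⊗1⊗1 + 1⊗x⊗1 + 1⊗1⊗x` for every element `x`
of the Lie algebra generated by `H₁, E₁±, H₂, E₂±`. -/
theorem lorentz_r3prime_mcybe {g : Type*} [LieRing g] [LieAlgebra ℂ g]
    (α β : ℂ) (H₁ E₁p E₁m H₂ E₂p E₂m : g)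
    (h1 : ⁅H₁, E₁p⁆ = E₁p) (h2 : ⁅H₁, E₁m⁆ = -E₁m) (h3 : ⁅E₁p, E₁m⁆ = (2 : ℂ) • H₁)
    (h4 : ⁅H₂, E₂p⁆ = E₂p) (h5 : ⁅H₂, E₂m⁆ = -E₂m) (h6 : ⁅E₂p, E₂m⁆ = (2 : ℂ) • H₂)
    (c1 : ⁅H₁, H₂⁆ = 0) (c2 : ⁅H₁, E₂p⁆ = 0) (c3 : ⁅H₁, E₂m⁆ = 0)
    (c4 : ⁅E₁p, H₂⁆ = 0) (c5 : ⁅E₁m, H₂⁆ = 0)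
    (c6 : ⁅E₁p, E₂p⁆ = 0) (c7 : ⁅E₁p, E₂m⁆ = 0)
    (c8 : ⁅E₁m, E₂p⁆ = 0) (c9 : ⁅E₁m, E₂m⁆ = 0) :
    let U := UniversalEnvelopingAlgebra ℂ g
    let ι : g → U := fun v => UniversalEnvelopingAlgebra.ι ℂ v
    let w12 : g → g → U ⊗[ℂ] (U ⊗[ℂ] U) := fun a b =>
      ι a ⊗ₜ[ℂ] (ι b ⊗ₜ[ℂ] 1) - ι b ⊗ₜ[ℂ] (ι a ⊗ₜ[ℂ] 1)
    let w13 : g → g → U ⊗[ℂ] (U ⊗[ℂ] U) := fun a b =>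
      ι a ⊗ₜ[ℂ] ((1 : U) ⊗ₜ[ℂ] ι b) - ι b ⊗ₜ[ℂ] ((1 : U) ⊗ₜ[ℂ] ι a)
    let w23 : g → g → U ⊗[ℂ] (U ⊗[ℂ] U) := fun a b =>
      (1 : U) ⊗ₜ[ℂ] (ι a ⊗ₜ[ℂ] ι b) - (1 : U) ⊗ₜ[ℂ] (ι b ⊗ₜ[ℂ] ι a)
    let r12 := (2 * (β + Complex.I * α)) • w12 E₁p E₁m +
      (2 * (β - Complex.I * α)) • w12 E₂p E₂m
    let r13 := (2 * (β + Complex.I * α)) • w13 E₁p E₁m +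
      (2 * (β - Complex.I * α)) • w13 E₂p E₂m
    let r23 := (2 * (β + Complex.I * α)) • w23 E₁p E₁m +
      (2 * (β - Complex.I * α)) • w23 E₂p E₂m
    let C := (r12 * r13 - r13 * r12) + (r12 * r23 - r23 * r12) + (r13 * r23 - r23 * r13)
    ∀ x ∈ LieSubalgebra.lieSpan ℂ g ({H₁, E₁p, E₁m, H₂, E₂p, E₂m} : Set g),
      (ι x ⊗ₜ[ℂ] ((1 : U) ⊗ₜ[ℂ] (1 : U)) + (1 : U) ⊗ₜ[ℂ] (ι x ⊗ₜ[ℂ] (1 : U)) +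
          (1 : U) ⊗ₜ[ℂ] ((1 : U) ⊗ₜ[ℂ] ι x)) * C -
        C * (ι x ⊗ₜ[ℂ] ((1 : U) ⊗ₜ[ℂ] (1 : U)) + (1 : U) ⊗ₜ[ℂ] (ι x ⊗ₜ[ℂ] (1 : U)) +
          (1 : U) ⊗ₜ[ℂ] ((1 : U) ⊗ₜ[ℂ] ι x)) = 0 :=
  lorentz_r3prime_mcybe_general α β H₁ E₁p E₁m H₂ E₂p E₂m h1 h2 h3 h4 h5 h6 c2 c3 c4 c5 c6 c7 c8 c9
end

section
/- In the Lorentz algebra o(3,1), the element r_2 = α(e_+ ∧ h - e'_+ ∧ h') + 2β e'_+ ∧ e_+, where x ∧ y := x ⊗ y - y ⊗ x, satisfies the homogeneous classical Yang–Baxter equation in U(o(3,1))^{⊗3}. -/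
/-! `r₂` lies in `Λ²` of the subalgebra spanned by `h, h', e₊, e'₊`, so only the brackets among
these four elements enter. Read in any associative algebra, each bracket `X * Y - Y * X = Z`
becomes the normal-ordering rule `Y * X = X * Y - Z`; with these rules every product in the
expansion of the CYBE is brought to the order `h, h', e₊, e'₊`, after which the equation is a
linear identity between tensors of normal-ordered monomials. -/

open TensorProduct

theorem UniversalEnvelopingAlgebra.ι_mul_sub_ι_mul {R L : Type*} [CommRing R] [LieRing L]
    [LieAlgebra R L] (x y : L) :
    ι R x * ι R y - ι R y * ι R x = (ι R ⁅x, y⁆ : UniversalEnvelopingAlgebra R L) := by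
  let : LieRing (UniversalEnvelopingAlgebra R L) := LieRing.ofAssociativeRing
  rw [← Ring.lie_def, LieHom.map_lie]

theorem classical_yang_baxter_of_lie_relations {R A : Type*} [CommRing R] [Ring A] [Algebra R A]
    (α β : R) (H H' E F : A)
    (hHE : H * E - E * H = E) (hHF : H * F - F * H = F) (hH'E : H' * E - E * H' = F)
    (hH'F : H' * F - F * H' = -E) (hEF : E * F - F * E = 0) (hHH' : H * H' - H' * H = 0) :
    let w12 : A → A → A ⊗[R] (A ⊗[R] A) := fun a b =>
      a ⊗ₜ[R] (b ⊗ₜ[R] 1) - b ⊗ₜ[R] (a ⊗ₜ[R] 1)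
    let w13 : A → A → A ⊗[R] (A ⊗[R] A) := fun a b =>
      a ⊗ₜ[R] ((1 : A) ⊗ₜ[R] b) - b ⊗ₜ[R] ((1 : A) ⊗ₜ[R] a)
    let w23 : A → A → A ⊗[R] (A ⊗[R] A) := fun a b =>
      (1 : A) ⊗ₜ[R] (a ⊗ₜ[R] b) - (1 : A) ⊗ₜ[R] (b ⊗ₜ[R] a)
    let r12 := α • (w12 E H - w12 F H') + (2 * β) • w12 F E
    let r13 := α • (w13 E H - w13 F H') + (2 * β) • w13 F E
    let r23 := α • (w23 E H - w23 F H') + (2 * β) • w23 F E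
    (r12 * r13 - r13 * r12) + (r12 * r23 - r23 * r12) + (r13 * r23 - r23 * r13) = 0 := by
  intro w12 w13 w23 r12 r13 r23
  have hEH : E * H = H * E - E := by linear_combination (norm := abel) -hHE
  have hFH : F * H = H * F - F := by linear_combination (norm := abel) -hHF
  have hEH' : E * H' = H' * E - F := by linear_combination (norm := abel) -hH'E
  have hFH' : F * H' = H' * F + E := by linear_combination (norm := abel) -hH'F
  have hFE : F * E = E * F := (sub_eq_zero.mp hEF).symm
  have hH'H : H' * H = H * H' := (sub_eq_zero.mp hHH').symm
  simp only [r12, r13, r23, w12, w13, w23, smul_sub, sub_mul, mul_sub, add_mul, mul_add,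
    smul_mul_assoc, mul_smul_comm, Algebra.TensorProduct.tmul_mul_tmul, mul_one, one_mul]
  simp only [hEH, hFH, hEH', hFH', hFE, hH'H]
  simp only [tmul_add, tmul_sub, add_tmul, sub_tmul, smul_add, smul_sub]
  module

theorem lorentz_r2_cybe_general {g : Type*} [LieRing g] [LieAlgebra ℝ g]
    (α β : ℝ) (h h' ep fp : g)
    (h1 : ⁅h, ep⁆ = ep) (h4 : ⁅h, fp⁆ = fp) (h6 : ⁅h', ep⁆ = fp)
    (h10 : ⁅h', fp⁆ = -ep) (h13 : ⁅h, h'⁆ = 0) (h14 : ⁅ep, fp⁆ = 0) :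
    let U := UniversalEnvelopingAlgebra ℝ g
    let ι : g → U := fun v => UniversalEnvelopingAlgebra.ι ℝ v
    -- wedge embeddings into the three legs of U ⊗ U ⊗ U
    let w12 : g → g → U ⊗[ℝ] (U ⊗[ℝ] U) := fun a b =>
      ι a ⊗ₜ[ℝ] (ι b ⊗ₜ[ℝ] 1) - ι b ⊗ₜ[ℝ] (ι a ⊗ₜ[ℝ] 1)
    let w13 : g → g → U ⊗[ℝ] (U ⊗[ℝ] U) := fun a b =>
      ι a ⊗ₜ[ℝ] ((1 : U) ⊗ₜ[ℝ] ι b) - ι b ⊗ₜ[ℝ] ((1 : U) ⊗ₜ[ℝ] ι a)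
    let w23 : g → g → U ⊗[ℝ] (U ⊗[ℝ] U) := fun a b =>
      (1 : U) ⊗ₜ[ℝ] (ι a ⊗ₜ[ℝ] ι b) - (1 : U) ⊗ₜ[ℝ] (ι b ⊗ₜ[ℝ] ι a)
    let r12 : U ⊗[ℝ] (U ⊗[ℝ] U) := α • (w12 ep h - w12 fp h') + (2 * β) • w12 fp ep
    let r13 : U ⊗[ℝ] (U ⊗[ℝ] U) := α • (w13 ep h - w13 fp h') + (2 * β) • w13 fp ep
    let r23 : U ⊗[ℝ] (U ⊗[ℝ] U) := α • (w23 ep h - w23 fp h') + (2 * β) • w23 fp ep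
    (r12 * r13 - r13 * r12) + (r12 * r23 - r23 * r12) + (r13 * r23 - r23 * r13) = 0 := by
  have hι := UniversalEnvelopingAlgebra.ι_mul_sub_ι_mul (R := ℝ) (L := g)
  exact classical_yang_baxter_of_lie_relations α β _ _ _ _
    (by rw [hι, h1]) (by rw [hι, h4]) (by rw [hι, h6])
    (by rw [hι, h10, map_neg]) (by rw [hι, h14, map_zero]) (by rw [hι, h13, map_zero])

/-- In the Lorentz algebra `o(3,1)`, the classical r-matrix
`r₂ = α(e₊ ∧ h - e'₊ ∧ h') + 2β e'₊ ∧ e₊` (with `x ∧ y = x ⊗ y - y ⊗ x`) satisfies the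
homogeneous classical Yang–Baxter equation in `U(o(3,1))^{⊗3}`. -/
theorem lorentz_r2_cybe {g : Type*} [LieRing g] [LieAlgebra ℝ g]
    (α β : ℝ) (h h' ep em fp fm : g)
    (h1 : ⁅h, ep⁆ = ep) (h2 : ⁅h, em⁆ = -em) (h3 : ⁅ep, em⁆ = (2 : ℝ) • h)
    (h4 : ⁅h, fp⁆ = fp) (h5 : ⁅h, fm⁆ = -fm)
    (h6 : ⁅h', ep⁆ = fp) (h7 : ⁅h', em⁆ = -fm)
    (h8 : ⁅ep, fm⁆ = (2 : ℝ) • h') (h9 : ⁅em, fp⁆ = -((2 : ℝ) • h'))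
    (h10 : ⁅h', fp⁆ = -ep) (h11 : ⁅h', fm⁆ = em)
    (h12 : ⁅fp, fm⁆ = -((2 : ℝ) • h)) (h13 : ⁅h, h'⁆ = 0)
    (h14 : ⁅ep, fp⁆ = 0) (h15 : ⁅em, fm⁆ = 0) :
    let U := UniversalEnvelopingAlgebra ℝ g
    let ι : g → U := fun v => UniversalEnvelopingAlgebra.ι ℝ v
    -- wedge embeddings into the three legs of U ⊗ U ⊗ U
    let w12 : g → g → U ⊗[ℝ] (U ⊗[ℝ] U) := fun a b =>
      ι a ⊗ₜ[ℝ] (ι b ⊗ₜ[ℝ] 1) - ι b ⊗ₜ[ℝ] (ι a ⊗ₜ[ℝ] 1)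
    let w13 : g → g → U ⊗[ℝ] (U ⊗[ℝ] U) := fun a b =>
      ι a ⊗ₜ[ℝ] ((1 : U) ⊗ₜ[ℝ] ι b) - ι b ⊗ₜ[ℝ] ((1 : U) ⊗ₜ[ℝ] ι a)
    let w23 : g → g → U ⊗[ℝ] (U ⊗[ℝ] U) := fun a b =>
      (1 : U) ⊗ₜ[ℝ] (ι a ⊗ₜ[ℝ] ι b) - (1 : U) ⊗ₜ[ℝ] (ι b ⊗ₜ[ℝ] ι a)
    let r12 : U ⊗[ℝ] (U ⊗[ℝ] U) := α • (w12 ep h - w12 fp h') + (2 * β) • w12 fp ep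
    let r13 : U ⊗[ℝ] (U ⊗[ℝ] U) := α • (w13 ep h - w13 fp h') + (2 * β) • w13 fp ep
    let r23 : U ⊗[ℝ] (U ⊗[ℝ] U) := α • (w23 ep h - w23 fp h') + (2 * β) • w23 fp ep
    (r12 * r13 - r13 * r12) + (r12 * r23 - r23 * r12) + (r13 * r23 - r23 * r13) = 0 :=
  lorentz_r2_cybe_general α β h h' ep fp h1 h4 h6 h10 h13 h14
end

section
/- Let H be a Hopf algebra and F ∈ H ⊗ H an invertible element satisfying the cocycle equation F^{12}(Δ ⊗ id)(F) = F^{23}(id ⊗ Δ)(F) and (ε ⊗ id)(F) = (id ⊗ ε)(F) = 1. Then the twisted coproduct Δ^{(F)}(a) = F Δ(a) F^{-1} is coassociative: (Δ^{(F)} ⊗ id) ∘ Δ^{(F)} = (id ⊗ Δ^{(F)}) ∘ Δ^{(F)}. -/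
/-!
Both iterated twisted coproducts are conjugates of the iterated coproduct: since `Δ ⊗ id` and
`id ⊗ Δ` are algebra maps, `(Δ^{(F)} ⊗ id) Δ^{(F)}` is `(Δ ⊗ id) Δ` conjugated by
`F¹² (Δ ⊗ id)(F)`, and `(id ⊗ Δ^{(F)}) Δ^{(F)}` is `(id ⊗ Δ) Δ` conjugated by `F²³ (id ⊗ Δ)(F)`.
The cocycle equation says the two conjugating units agree, so coassociativity of `Δ` finishes.
-/

open TensorProduct

theorem MonoidHom.conj_map_conj {M N : Type*} [Monoid M] [Monoid N] (f g : M →* N)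
    (u : Mˣ) (x : M) :
    g u * f (u * x * ↑u⁻¹) * g ↑u⁻¹ =
      ↑(Units.map g u * Units.map f u) * f x * ↑(Units.map g u * Units.map f u)⁻¹ := by
  simp [mul_assoc]

section

variable {R A B M : Type*} [CommSemiring R] [Semiring A] [Algebra R A] [Semiring B]
  [Algebra R B] [AddCommMonoid M] [Module R M]

theorem TensorProduct.map_mulRight_mulLeft_comp_id (g : M →ₗ[R] A) (x y : A) (z : M ⊗[R] B) :
    map (LinearMap.mulRight R y ∘ₗ LinearMap.mulLeft R x ∘ₗ g) LinearMap.id z =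
      (x ⊗ₜ 1) * map g LinearMap.id z * (y ⊗ₜ 1) := by
  induction z using TensorProduct.induction_on with
  | zero => simp
  | tmul m b => simp [Algebra.TensorProduct.tmul_mul_tmul]
  | add z z' hz hz' => simp only [map_add, hz, hz', mul_add, add_mul]

theorem TensorProduct.map_id_mulRight_mulLeft_comp (g : M →ₗ[R] B) (x y : B) (z : A ⊗[R] M) :
    map LinearMap.id (LinearMap.mulRight R y ∘ₗ LinearMap.mulLeft R x ∘ₗ g) z =
      (1 ⊗ₜ x) * map LinearMap.id g z * (1 ⊗ₜ y) := by
  induction z using TensorProduct.induction_on with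
  | zero => simp
  | tmul a m => simp [Algebra.TensorProduct.tmul_mul_tmul]
  | add z z' hz hz' => simp only [map_add, hz, hz', mul_add, add_mul]

end

namespace Algebra.TensorProduct

variable {R A B C : Type*} [CommSemiring R] [Semiring A] [Algebra R A] [Semiring B]
  [Algebra R B] [Semiring C] [Algebra R C]

/-- `x ↦ x¹²`, i.e. `a ⊗ b ↦ a ⊗ b ⊗ 1`. -/
noncomputable def leg12 : A ⊗[R] B →ₐ[R] A ⊗[R] (B ⊗[R] C) :=
  map (AlgHom.id R A) includeLeft

theorem assoc_tmul_one (x : A ⊗[R] B) :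
    Algebra.TensorProduct.assoc R R R A B C (x ⊗ₜ 1) = leg12 x := by
  induction x using TensorProduct.induction_on with
  | zero => simp
  | tmul a b => rfl
  | add x x' hx hx' => simp only [add_tmul, map_add, hx, hx']

end Algebra.TensorProduct

namespace Bialgebra

variable (R H : Type*) [CommSemiring R] [Semiring H] [Bialgebra R H]

noncomputable def comulTensorId : H ⊗[R] H →ₐ[R] H ⊗[R] (H ⊗[R] H) :=
  (Algebra.TensorProduct.assoc R R R H H H).toAlgHom.comp
    (Algebra.TensorProduct.map (comulAlgHom R H) (AlgHom.id R H))

noncomputable def idTensorComul : H ⊗[R] H →ₐ[R] H ⊗[R] (H ⊗[R] H) :=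
  Algebra.TensorProduct.map (AlgHom.id R H) (comulAlgHom R H)

variable {R H}

theorem comulTensorId_comul (a : H) :
    comulTensorId R H (Coalgebra.comul a) = idTensorComul R H (Coalgebra.comul a) :=
  Coalgebra.coassoc_apply a

theorem assoc_map_mulRight_mulLeft_comul_id (x y z : H ⊗[R] H) :
    _root_.TensorProduct.assoc R H H H
        (map (LinearMap.mulRight R y ∘ₗ LinearMap.mulLeft R x ∘ₗ Coalgebra.comul)
          LinearMap.id z) =
      Algebra.TensorProduct.leg12 x * comulTensorId R H z * Algebra.TensorProduct.leg12 y := by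
  rw [map_mulRight_mulLeft_comp_id]
  change Algebra.TensorProduct.assoc R R R H H H (_ * _ * _) = _
  rw [map_mul, map_mul, Algebra.TensorProduct.assoc_tmul_one,
    Algebra.TensorProduct.assoc_tmul_one]
  rfl

end Bialgebra

/-- If `F` is an invertible two-tensor satisfying the cocycle equation and
the counit normalization, then the twisted coproduct `Δ^{(F)}(a) = F Δ(a) F⁻¹` is
coassociative. -/
theorem twisted_coproduct_coassociative {R : Type*} [CommRing R] {H : Type*} [Ring H]
    [HopfAlgebra R H] (F Finv : H ⊗[R] H)
    (hinv : F * Finv = 1 ∧ Finv * F = 1) :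
    let e12 : H ⊗[R] H →ₗ[R] H ⊗[R] (H ⊗[R] H) :=
      TensorProduct.map LinearMap.id ((TensorProduct.mk R H H).flip 1)
    let e23 : H ⊗[R] H →ₗ[R] H ⊗[R] (H ⊗[R] H) := TensorProduct.mk R H (H ⊗[R] H) 1
    let Δ₀ : H →ₗ[R] H ⊗[R] H := Coalgebra.comul
    let E1 : H ⊗[R] H →ₗ[R] H :=
      (TensorProduct.lid R H).toLinearMap ∘ₗ
        TensorProduct.map (Coalgebra.counit (R := R) (A := H)) LinearMap.id
    let E2 : H ⊗[R] H →ₗ[R] H :=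
      (TensorProduct.rid R H).toLinearMap ∘ₗ
        TensorProduct.map LinearMap.id (Coalgebra.counit (R := R) (A := H))
    -- twisted coproduct Δ^{(F)}
    let ΔF : H →ₗ[R] H ⊗[R] H :=
      LinearMap.mulRight R Finv ∘ₗ LinearMap.mulLeft R F ∘ₗ Δ₀
    -- cocycle equation for F
    e12 F * ((TensorProduct.assoc R H H H).toLinearMap
        (TensorProduct.map Δ₀ LinearMap.id F)) =
      e23 F * TensorProduct.map LinearMap.id Δ₀ F →
    -- counit normalization for F
    (E1 F = 1 ∧ E2 F = 1) →
    -- coassociativity of the twisted coproduct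
    ∀ a : H,
      (TensorProduct.assoc R H H H).toLinearMap
          (TensorProduct.map ΔF LinearMap.id (ΔF a)) =
        TensorProduct.map LinearMap.id ΔF (ΔF a) := by
  intro e12 e23 Δ₀ E1 E2 ΔF hcocycle _ a
  let T := H ⊗[R] (H ⊗[R] H)
  let u : (H ⊗[R] H)ˣ := ⟨F, Finv, hinv.1, hinv.2⟩
  let w₁ := Units.map (Algebra.TensorProduct.leg12 : H ⊗[R] H →ₐ[R] T).toMonoidHom u *
    Units.map (Bialgebra.comulTensorId R H).toMonoidHom u
  let w₂ := Units.map (Algebra.TensorProduct.includeRight : H ⊗[R] H →ₐ[R] T).toMonoidHom u *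
    Units.map (Bialgebra.idTensorComul R H).toMonoidHom u
  have hw : w₁ = w₂ := Units.ext hcocycle
  have hΔF : ΔF a = F * Coalgebra.comul a * Finv := rfl
  calc _ = w₁ * Bialgebra.comulTensorId R H (Coalgebra.comul a) * ↑w₁⁻¹ := by
        refine (Bialgebra.assoc_map_mulRight_mulLeft_comul_id F Finv (ΔF a)).trans ?_
        rw [hΔF]
        exact MonoidHom.conj_map_conj _ _ u _
    _ = w₂ * Bialgebra.idTensorComul R H (Coalgebra.comul a) * ↑w₂⁻¹ := by
        rw [hw, Bialgebra.comulTensorId_comul]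
    _ = _ := by
        refine Eq.trans ?_ (map_id_mulRight_mulLeft_comp Coalgebra.comul F Finv (ΔF a)).symm
        rw [hΔF]
        exact (MonoidHom.conj_map_conj _ _ u _).symm
end

section
/- Let g be a Lie algebra, r_1, r_2 ∈ g ⊗ g antisymmetric two-tensors each satisfying the homogeneous classical Yang–Baxter equation. Suppose r_2 is subordinated to r_1, i.e., [x ⊗ 1 + 1 ⊗ x, r_1] = 0 for every x in the support of r_2 (the Lie subalgebra generated by the tensor-factor elements of r_2), and additionally [x ⊗ 1 + 1 ⊗ x, r_2] = 0 for every x in the support of r_1. Then r = r_1 + r_2 also satisfies the homogeneous classical Yang–Baxter equation. -/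
/-!
Expanding the Yang–Baxter expression of `r₁ + r₂`, the terms other than those of `r₁` and `r₂`
regroup as `[r₁¹², r₂¹³ + r₂²³] - [r₁¹³, r₂¹² - r₂²³] - [r₁²³, r₂¹² + r₂¹³]`. Write
`r₂ = ∑ xᵢ ⊗ yᵢ` with `xᵢ, yᵢ` in the support of `r₂`, and `Δx = x ⊗ 1 + 1 ⊗ x`. Then
`r₂¹³ + r₂²³ = ∑ (Δxᵢ)¹² yᵢ³`, `r₂¹² + r₂¹³ = ∑ xᵢ¹ (Δyᵢ)²³` and, by antisymmetry of `r₂`,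
`r₂¹² - r₂²³ = r₂¹² + r₂³² = ∑ (Δxᵢ)¹³ yᵢ²`. In each product the first factor commutes with the
relevant leg of `r₁` by invariance, and the second lives in the leg that `r₁` does not occupy.
-/

open TensorProduct

variable {k : Type*} [Field k] {g : Type*} [LieRing g] [LieAlgebra k g]

attribute [local instance 100] LieRing.ofAssociativeRing

/-- The support of a two-tensor `r ∈ g ⊗ g`: the smallest Lie subalgebra `s ⊆ g` such that
`r` lies in the image of `s ⊗ s`.  It coincides with the Lie subalgebra generated by the
tensor factors of `r`. -/
noncomputable def rmatrixSupport (r : g ⊗[k] g) : LieSubalgebra k g :=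
  sInf {s : LieSubalgebra k g |
    r ∈ LinearMap.range (TensorProduct.map s.incl.toLinearMap s.incl.toLinearMap)}

namespace TensorProduct

section CommSemiring

variable {R M N : Type*} [CommSemiring R] [AddCommMonoid M] [Module R M] [AddCommMonoid N]
  [Module R N]

noncomputable def leftFactorSpan (r : M ⊗[R] N) : Submodule R M :=
  Submodule.span R (Set.range fun φ : Module.Dual R N => TensorProduct.rid R M (φ.lTensor M r))

noncomputable def rightFactorSpan (r : M ⊗[R] N) : Submodule R N :=
  Submodule.span R (Set.range fun φ : Module.Dual R M => TensorProduct.lid R N (φ.rTensor N r))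

lemma mem_range_rTensor_subtype_of_forall_dual [Module.Free R N] {p : Submodule R M}
    {r : M ⊗[R] N} (h : ∀ φ : Module.Dual R N, TensorProduct.rid R M (φ.lTensor M r) ∈ p) :
    r ∈ LinearMap.range (p.subtype.rTensor N) := by
  classical
  let b := Module.Free.chooseBasis R N
  rw [← (equivFinsuppOfBasisRight b).symm_apply_apply r, equivFinsuppOfBasisRight_symm_apply]
  refine Submodule.finsuppSum_mem _ _ _ _ fun i _ => ⟨⟨_, h (b.coord i)⟩ ⊗ₜ b i, ?_⟩
  rw [LinearMap.rTensor_tmul, equivFinsuppOfBasisRight_apply]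
  rfl

lemma mem_range_lTensor_subtype_of_forall_dual [Module.Free R M] {q : Submodule R N}
    {r : M ⊗[R] N} (h : ∀ φ : Module.Dual R M, TensorProduct.lid R N (φ.rTensor N r) ∈ q) :
    r ∈ LinearMap.range (q.subtype.lTensor M) := by
  classical
  let b := Module.Free.chooseBasis R M
  rw [← (equivFinsuppOfBasisLeft b).symm_apply_apply r, equivFinsuppOfBasisLeft_symm_apply]
  refine Submodule.finsuppSum_mem _ _ _ _ fun i _ => ⟨b i ⊗ₜ ⟨_, h (b.coord i)⟩, ?_⟩
  rw [LinearMap.lTensor_tmul, equivFinsuppOfBasisLeft_apply]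
  rfl

lemma leftFactorSpan_le {p : Submodule R M} {q : Submodule R N} {r : M ⊗[R] N}
    (hr : r ∈ LinearMap.range (mapIncl p q)) : leftFactorSpan r ≤ p := by
  obtain ⟨t, rfl⟩ := hr
  refine Submodule.span_le.mpr ?_
  rintro _ ⟨φ, rfl⟩
  induction t with
  | zero => simp
  | tmul x y => simp [Submodule.smul_mem]
  | add t t' ht ht' => simpa using add_mem ht ht'

lemma rightFactorSpan_le {p : Submodule R M} {q : Submodule R N} {r : M ⊗[R] N}
    (hr : r ∈ LinearMap.range (mapIncl p q)) : rightFactorSpan r ≤ q := by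
  obtain ⟨t, rfl⟩ := hr
  refine Submodule.span_le.mpr ?_
  rintro _ ⟨φ, rfl⟩
  induction t with
  | zero => simp
  | tmul x y => simp [Submodule.smul_mem]
  | add t t' ht ht' => simpa using add_mem ht ht'

end CommSemiring

variable {K M N : Type*} [Field K] [AddCommGroup M] [Module K M] [AddCommGroup N] [Module K N]

lemma mem_range_mapIncl_of_mem_range_rTensor_of_mem_range_lTensor {p : Submodule K M}
    {q : Submodule K N} {r : M ⊗[K] N} (hp : r ∈ LinearMap.range (p.subtype.rTensor N))
    (hq : r ∈ LinearMap.range (q.subtype.lTensor M)) : r ∈ LinearMap.range (mapIncl p q) := by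
  obtain ⟨π, hπ⟩ := p.subtype.exists_leftInverse_of_injective p.ker_subtype
  obtain ⟨ρ, hρ⟩ := q.subtype.exists_leftInverse_of_injective q.ker_subtype
  have hπr : (p.subtype ∘ₗ π).rTensor N r = r := by
    obtain ⟨t, rfl⟩ := hp
    rw [← LinearMap.comp_apply, ← LinearMap.rTensor_comp, LinearMap.comp_assoc, hπ]; rfl
  have hρr : (q.subtype ∘ₗ ρ).lTensor M r = r := by
    obtain ⟨t, rfl⟩ := hq
    rw [← LinearMap.comp_apply, ← LinearMap.lTensor_comp, LinearMap.comp_assoc, hρ]; rfl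
  refine ⟨map π ρ r, ?_⟩
  rw [mapIncl, map_map, ← LinearMap.rTensor_comp_lTensor, LinearMap.comp_apply, hρr, hπr]

end TensorProduct

theorem mem_range_map_incl_rmatrixSupport (r : g ⊗[k] g) :
    r ∈ LinearMap.range (TensorProduct.map (rmatrixSupport r).incl.toLinearMap
      (rmatrixSupport r).incl.toLinearMap) := by
  let W := leftFactorSpan r ⊔ rightFactorSpan r
  have hW : r ∈ LinearMap.range (mapIncl W W) :=
    mem_range_mapIncl_of_mem_range_rTensor_of_mem_range_lTensor
      (mem_range_rTensor_subtype_of_forall_dual fun φ =>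
        Submodule.mem_sup_left (Submodule.subset_span ⟨φ, rfl⟩))
      (mem_range_lTensor_subtype_of_forall_dual fun φ =>
        Submodule.mem_sup_right (Submodule.subset_span ⟨φ, rfl⟩))
  have hle : W ≤ (rmatrixSupport r).toSubmodule := by
    rw [rmatrixSupport, LieSubalgebra.sInf_toSubmodule]
    refine le_sInf ?_
    rintro _ ⟨s, hs, rfl⟩
    exact sup_le (leftFactorSpan_le hs) (rightFactorSpan_le hs)
  exact range_mapIncl_mono hle hle hW

namespace YangBaxter

variable {k A : Type*} [CommRing k] [Ring A] [Algebra k A]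

variable (k A) in
noncomputable def leg12 : A ⊗[k] A →ₐ[k] A ⊗[k] (A ⊗[k] A) :=
  Algebra.TensorProduct.map (AlgHom.id k A) Algebra.TensorProduct.includeLeft

variable (k A) in
noncomputable def leg13 : A ⊗[k] A →ₐ[k] A ⊗[k] (A ⊗[k] A) :=
  Algebra.TensorProduct.map (AlgHom.id k A) Algebra.TensorProduct.includeRight

variable (k A) in
noncomputable def leg23 : A ⊗[k] A →ₐ[k] A ⊗[k] (A ⊗[k] A) :=
  Algebra.TensorProduct.includeRight

@[simp] lemma leg12_tmul (x y : A) : leg12 k A (x ⊗ₜ y) = x ⊗ₜ (y ⊗ₜ 1) := rfl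
@[simp] lemma leg13_tmul (x y : A) : leg13 k A (x ⊗ₜ y) = x ⊗ₜ (1 ⊗ₜ y) := rfl
@[simp] lemma leg23_apply (P : A ⊗[k] A) : leg23 k A P = 1 ⊗ₜ P := rfl

noncomputable def cybe (P : A ⊗[k] A) : A ⊗[k] (A ⊗[k] A) :=
  (leg12 k A P * leg13 k A P - leg13 k A P * leg12 k A P) +
    (leg12 k A P * leg23 k A P - leg23 k A P * leg12 k A P) +
    (leg13 k A P * leg23 k A P - leg23 k A P * leg13 k A P)

variable (k) in
def primitiveCoproduct (x : A) : A ⊗[k] A := x ⊗ₜ 1 + 1 ⊗ₜ x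

lemma commute_leg12_one_tmul_one_tmul (P : A ⊗[k] A) (y : A) :
    Commute (leg12 k A P) (1 ⊗ₜ (1 ⊗ₜ y)) := by
  induction P with
  | zero => simp
  | tmul a b => exact (Commute.one_right a).tmul ((Commute.one_right b).tmul (Commute.one_left y))
  | add P Q hP hQ => simpa using hP.add_left hQ

lemma commute_leg13_one_tmul_tmul_one (P : A ⊗[k] A) (y : A) :
    Commute (leg13 k A P) (1 ⊗ₜ (y ⊗ₜ 1)) := by
  induction P with
  | zero => simp
  | tmul a b => exact (Commute.one_right a).tmul ((Commute.one_left y).tmul (Commute.one_right b))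
  | add P Q hP hQ => simpa using hP.add_left hQ

lemma commute_leg23_tmul_one (P : A ⊗[k] A) (x : A) :
    Commute (leg23 k A P) (x ⊗ₜ 1) := by
  simp [Commute, SemiconjBy, Algebra.TensorProduct.tmul_mul_tmul]

lemma leg13_add_leg23_tmul (x y : A) :
    leg13 k A (x ⊗ₜ y) + leg23 k A (x ⊗ₜ y) =
      leg12 k A (primitiveCoproduct k x) * (1 ⊗ₜ (1 ⊗ₜ y)) := by
  simp [primitiveCoproduct, add_mul, Algebra.TensorProduct.tmul_mul_tmul]

lemma leg12_add_leg23_tmul_swap (x y : A) :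
    leg12 k A (x ⊗ₜ y) + leg23 k A (y ⊗ₜ x) =
      leg13 k A (primitiveCoproduct k x) * (1 ⊗ₜ (y ⊗ₜ 1)) := by
  simp [primitiveCoproduct, add_mul, Algebra.TensorProduct.tmul_mul_tmul]

lemma leg12_add_leg13_tmul (x y : A) :
    leg12 k A (x ⊗ₜ y) + leg13 k A (x ⊗ₜ y) = (x ⊗ₜ 1) * leg23 k A (primitiveCoproduct k y) := by
  simp [primitiveCoproduct, mul_add, tmul_add, Algebra.TensorProduct.tmul_mul_tmul,
    Algebra.TensorProduct.one_def]

lemma commutator_sum_add_of_commute {R : Type*} [Ring R] {a b c d e f : R}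
    (h₁ : Commute a (d + f)) (h₂ : Commute c (b - f)) (h₃ : Commute e (b + d)) :
    (a + b) * (c + d) - (c + d) * (a + b) + ((a + b) * (e + f) - (e + f) * (a + b)) +
        ((c + d) * (e + f) - (e + f) * (c + d)) =
      (a * c - c * a + (a * e - e * a) + (c * e - e * c)) +
        (b * d - d * b + (b * f - f * b) + (d * f - f * d)) := by
  have mixed : (a + b) * (c + d) - (c + d) * (a + b) + ((a + b) * (e + f) - (e + f) * (a + b)) +
        ((c + d) * (e + f) - (e + f) * (c + d)) -
      ((a * c - c * a + (a * e - e * a) + (c * e - e * c)) +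
        (b * d - d * b + (b * f - f * b) + (d * f - f * d))) =
      (a * (d + f) - (d + f) * a) - (c * (b - f) - (b - f) * c) - (e * (b + d) - (b + d) * e) := by
    noncomm_ring
  rwa [sub_eq_zero_of_eq h₁.eq, sub_eq_zero_of_eq h₂.eq, sub_eq_zero_of_eq h₃.eq, sub_zero,
    sub_zero, sub_eq_zero] at mixed

lemma cybe_add {P Q : A ⊗[k] A}
    (h12 : Commute (leg12 k A P) (leg13 k A Q + leg23 k A Q))
    (h13 : Commute (leg13 k A P) (leg12 k A Q - leg23 k A Q))
    (h23 : Commute (leg23 k A P) (leg12 k A Q + leg13 k A Q)) :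
    cybe (P + Q) = cybe P + cybe Q := by
  simp only [cybe, map_add]
  exact commutator_sum_add_of_commute h12 h13 h23

lemma commute_apply_of_mem_range_map {V B : Type*} [AddCommMonoid V] [Module k V] [Semiring B]
    [Module k B] (f : V →ₗ[k] A) (F : A ⊗[k] A →ₗ[k] B) {c : B}
    (h : ∀ v w, Commute c (F (f v ⊗ₜ f w))) {Q : A ⊗[k] A} (hQ : Q ∈ LinearMap.range (map f f)) :
    Commute c (F Q) := by
  obtain ⟨t, rfl⟩ := hQ
  induction t with
  | zero => simp
  | tmul v w => exact h v w
  | add t t' ht ht' => simpa using ht.add_right ht'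

theorem cybe_add_of_commute_primitiveCoproduct {V : Type*} [AddCommMonoid V] [Module k V]
    (f : V →ₗ[k] A) {P Q : A ⊗[k] A} (hP : ∀ v, Commute (primitiveCoproduct k (f v)) P)
    (hQ : Q ∈ LinearMap.range (map f f)) (hQ_anti : TensorProduct.comm k A A Q = -Q) :
    cybe (P + Q) = cybe P + cybe Q := by
  refine cybe_add ?_ ?_ ?_
  · refine commute_apply_of_mem_range_map f ((leg13 k A).toLinearMap + (leg23 k A).toLinearMap)
      (fun v w => ?_) hQ
    simp only [LinearMap.add_apply, AlgHom.toLinearMap_apply, leg13_add_leg23_tmul]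
    exact ((hP v).map (leg12 k A)).symm.mul_right (commute_leg12_one_tmul_one_tmul P (f w))
  · rw [sub_eq_add_neg, ← map_neg, ← hQ_anti]
    refine commute_apply_of_mem_range_map f
      ((leg12 k A).toLinearMap + (leg23 k A).toLinearMap ∘ₗ (TensorProduct.comm k A A).toLinearMap)
      (fun v w => ?_) hQ
    simp only [LinearMap.add_apply, LinearMap.comp_apply, AlgHom.toLinearMap_apply,
      LinearEquiv.coe_coe, comm_tmul, leg12_add_leg23_tmul_swap]
    exact ((hP v).map (leg13 k A)).symm.mul_right (commute_leg13_one_tmul_tmul_one P (f w))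
  · refine commute_apply_of_mem_range_map f ((leg12 k A).toLinearMap + (leg13 k A).toLinearMap)
      (fun v w => ?_) hQ
    simp only [LinearMap.add_apply, AlgHom.toLinearMap_apply, leg12_add_leg13_tmul]
    exact (commute_leg23_tmul_one P (f v)).mul_right ((hP w).map (leg23 k A)).symm

end YangBaxter

theorem sum_of_subordinated_rmatrices_cybe_general (r₁ r₂ : g ⊗[k] g)
    (ha₂ : (TensorProduct.comm k g g) r₂ = -r₂) :
    let U := UniversalEnvelopingAlgebra k g
    let ιl : g →ₗ[k] U := (UniversalEnvelopingAlgebra.ι k).toLinearMap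
    -- embedding g ⊗ g → U(g) ⊗ U(g)
    let E : g ⊗[k] g →ₗ[k] U ⊗[k] U := TensorProduct.map ιl ιl
    -- the three embeddings of U ⊗ U into U ⊗ U ⊗ U
    let e12 : U ⊗[k] U →ₗ[k] U ⊗[k] (U ⊗[k] U) :=
      TensorProduct.map LinearMap.id ((TensorProduct.mk k U U).flip 1)
    let e13 : U ⊗[k] U →ₗ[k] U ⊗[k] (U ⊗[k] U) :=
      TensorProduct.map LinearMap.id (TensorProduct.mk k U U 1)
    let e23 : U ⊗[k] U →ₗ[k] U ⊗[k] (U ⊗[k] U) := TensorProduct.mk k U (U ⊗[k] U) 1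
    -- the CYBE expression
    let cybe : g ⊗[k] g → Prop := fun r =>
      (e12 (E r) * e13 (E r) - e13 (E r) * e12 (E r)) +
        (e12 (E r) * e23 (E r) - e23 (E r) * e12 (E r)) +
        (e13 (E r) * e23 (E r) - e23 (E r) * e13 (E r)) = 0
    -- adjoint action x ↦ [x ⊗ 1 + 1 ⊗ x, ·] on U ⊗ U
    let D : g → U ⊗[k] U := fun x => ιl x ⊗ₜ[k] (1 : U) + (1 : U) ⊗ₜ[k] ιl x
    cybe r₁ → cybe r₂ →
      (∀ x ∈ rmatrixSupport r₂, D x * E r₁ - E r₁ * D x = 0) →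
      (∀ x ∈ rmatrixSupport r₁, D x * E r₂ - E r₂ * D x = 0) →
      cybe (r₁ + r₂) := by
  intro U ιl E e12 e13 e23 cybe D hc₁ hc₂ hinv _
  obtain ⟨t, ht⟩ := mem_range_map_incl_rmatrixSupport r₂
  let f := ιl ∘ₗ (rmatrixSupport r₂).incl.toLinearMap
  have hr₂ : E r₂ ∈ LinearMap.range (map f f) := ⟨t, (map_map _ _ _ _ t).symm.trans (congrArg E ht)⟩
  have hanti : TensorProduct.comm k U U (E r₂) = -E r₂ := by
    rw [← map_comm ιl ιl r₂, ha₂, map_neg]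
  have hr₁ : ∀ v, Commute (YangBaxter.primitiveCoproduct k (f v)) (E r₁) :=
    fun v => sub_eq_zero.mp (hinv v v.2)
  change YangBaxter.cybe (E (r₁ + r₂)) = 0
  rw [map_add, YangBaxter.cybe_add_of_commute_primitiveCoproduct f hr₁ hr₂ hanti]
  change YangBaxter.cybe (E r₁) = 0 at hc₁
  change YangBaxter.cybe (E r₂) = 0 at hc₂
  rw [hc₁, hc₂, add_zero]

/-- If antisymmetric classical r-matrices `r₁, r₂` each satisfy the
homogeneous CYBE, `r₂` is subordinated to `r₁` (`r₁` is invariant under the support of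
`r₂`), and moreover `r₂` is invariant under the support of `r₁`, then `r₁ + r₂` satisfies
the homogeneous CYBE. -/
theorem sum_of_subordinated_rmatrices_cybe (r₁ r₂ : g ⊗[k] g)
    (ha₁ : (TensorProduct.comm k g g) r₁ = -r₁)
    (ha₂ : (TensorProduct.comm k g g) r₂ = -r₂) :
    let U := UniversalEnvelopingAlgebra k g
    let ιl : g →ₗ[k] U := (UniversalEnvelopingAlgebra.ι k).toLinearMap
    -- embedding g ⊗ g → U(g) ⊗ U(g)
    let E : g ⊗[k] g →ₗ[k] U ⊗[k] U := TensorProduct.map ιl ιl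
    -- the three embeddings of U ⊗ U into U ⊗ U ⊗ U
    let e12 : U ⊗[k] U →ₗ[k] U ⊗[k] (U ⊗[k] U) :=
      TensorProduct.map LinearMap.id ((TensorProduct.mk k U U).flip 1)
    let e13 : U ⊗[k] U →ₗ[k] U ⊗[k] (U ⊗[k] U) :=
      TensorProduct.map LinearMap.id (TensorProduct.mk k U U 1)
    let e23 : U ⊗[k] U →ₗ[k] U ⊗[k] (U ⊗[k] U) := TensorProduct.mk k U (U ⊗[k] U) 1
    -- the CYBE expression
    let cybe : g ⊗[k] g → Prop := fun r =>
      (e12 (E r) * e13 (E r) - e13 (E r) * e12 (E r)) +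
        (e12 (E r) * e23 (E r) - e23 (E r) * e12 (E r)) +
        (e13 (E r) * e23 (E r) - e23 (E r) * e13 (E r)) = 0
    -- adjoint action x ↦ [x ⊗ 1 + 1 ⊗ x, ·] on U ⊗ U
    let D : g → U ⊗[k] U := fun x => ιl x ⊗ₜ[k] (1 : U) + (1 : U) ⊗ₜ[k] ιl x
    cybe r₁ → cybe r₂ →
      (∀ x ∈ rmatrixSupport r₂, D x * E r₁ - E r₁ * D x = 0) →
      (∀ x ∈ rmatrixSupport r₁, D x * E r₂ - E r₂ * D x = 0) →
      cybe (r₁ + r₂) :=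
  sum_of_subordinated_rmatrices_cybe_general r₁ r₂ ha₂
end

section
/- Let H be a Hopf algebra over a field, F = Σ_i f_i^{(1)} ⊗ f_i^{(2)} an invertible twist satisfying the cocycle and counit conditions, and u = Σ_i f_i^{(1)} S(f_i^{(2)}) where S is the antipode of H. Then u is invertible and S^{(F)}(a) = u S(a) u^{-1} defines an antipode for the twisted Hopf algebra H^{(F)} with coproduct Δ^{(F)}(a) = F Δ(a) F^{-1}: i.e., m ∘ (S^{(F)} ⊗ id) ∘ Δ^{(F)} = η ∘ ε = m ∘ (id ⊗ S^{(F)}) ∘ Δ^{(F)}. -/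
/-!
Elements `P = Σ a ⊗ b` of `H ⊗ H` act on `H` on the right by `x ↦ Σ S(a) x b` and on the left by
`x ↦ Σ a x S(b)` (as `S` reverses products), and `v`, `u` are `1` acted on by `F⁻¹`, `F`.
Thus `Σ S^F(a₁) a₂` over `Δ^F(a)` is `u` times `v` acted on by `F Δ(a) F⁻¹`: `F` takes `v` to
`F⁻¹F • 1 = 1`, then `Δ(a)` gives `ε(a)` by the antipode axiom, `F⁻¹` gives `ε(a) v`, and `u v = 1`.
For `u v = 1`, apply `x ⊗ y ⊗ z ↦ x S(y) z` to the cocycle identity rearranged as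
`(1 ⊗ F⁻¹)(F ⊗ 1) = (id ⊗ Δ)(F) (Δ ⊗ id)(F⁻¹)`: the left side gives `u v`, and on the right the
antipode axiom leaves `(id ⊗ ε)(F) (ε ⊗ id)(F⁻¹) = 1`. Symmetrically, `x ⊗ y ⊗ z ↦ S(x) y S(z)`
gives `v u = 1`.
-/

open TensorProduct HopfAlgebra
open Algebra.TensorProduct (includeLeft includeRight lTensor rTensor)

namespace DrinfeldTwist

noncomputable section

variable {k H : Type*} [CommSemiring k] [Semiring H] [HopfAlgebra k H]

variable (k H) in
def mulIdAntipode : H ⊗[k] H →ₗ[k] H := LinearMap.mul' k H ∘ₗ map LinearMap.id (antipode k)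

variable (k H) in
def mulAntipodeId : H ⊗[k] H →ₗ[k] H := LinearMap.mul' k H ∘ₗ map (antipode k) LinearMap.id

@[simp]
theorem mulIdAntipode_tmul (a b : H) : mulIdAntipode k H (a ⊗ₜ b) = a * antipode k b := rfl

@[simp]
theorem mulAntipodeId_tmul (a b : H) : mulAntipodeId k H (a ⊗ₜ b) = antipode k a * b := rfl

theorem mulIdAntipode_comul (a : H) :
    mulIdAntipode k H (Coalgebra.comul a) = algebraMap k H (Coalgebra.counit a) :=
  mul_antipode_lTensor_comul_apply a

theorem mulAntipodeId_comul (a : H) :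
    mulAntipodeId k H (Coalgebra.comul a) = algebraMap k H (Coalgebra.counit a) :=
  mul_antipode_rTensor_comul_apply a

section Sandwich

variable (k H)

def leftSandwich : H ⊗[k] H →ₗ[k] Module.End k H :=
  LinearMap.mul' k (Module.End k H) ∘ₗ
    map (LinearMap.mul k H ∘ₗ antipode k) (LinearMap.mul k H).flip

def rightSandwich : H ⊗[k] H →ₗ[k] Module.End k H :=
  LinearMap.mul' k (Module.End k H) ∘ₗ
    map (LinearMap.mul k H) ((LinearMap.mul k H).flip ∘ₗ antipode k)

variable {k H}

@[simp]
theorem leftSandwich_tmul_apply (a b x : H) :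
    leftSandwich k H (a ⊗ₜ b) x = antipode k a * x * b := by
  simp [leftSandwich, mul_assoc]

@[simp]
theorem rightSandwich_tmul_apply (a b x : H) :
    rightSandwich k H (a ⊗ₜ b) x = a * x * antipode k b := by
  simp [rightSandwich, mul_assoc]

theorem leftSandwich_mul (P Q : H ⊗[k] H) :
    leftSandwich k H (P * Q) = leftSandwich k H Q * leftSandwich k H P := by
  induction P using TensorProduct.induction_on with
  | zero => simp
  | add P P' hP hP' => simp [add_mul, mul_add, hP, hP']
  | tmul a b =>
    induction Q using TensorProduct.induction_on with
    | zero => simp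
    | add Q Q' hQ hQ' => simp [mul_add, add_mul, hQ, hQ']
    | tmul c d =>
      ext x
      simp [Algebra.TensorProduct.tmul_mul_tmul, antipode_mul_antidistrib, mul_assoc]

theorem rightSandwich_mul (P Q : H ⊗[k] H) :
    rightSandwich k H (P * Q) = rightSandwich k H P * rightSandwich k H Q := by
  induction P using TensorProduct.induction_on with
  | zero => simp
  | add P P' hP hP' => simp [add_mul, hP, hP']
  | tmul a b =>
    induction Q using TensorProduct.induction_on with
    | zero => simp
    | add Q Q' hQ hQ' => simp [mul_add, hQ, hQ']
    | tmul c d =>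
      ext x
      simp [Algebra.TensorProduct.tmul_mul_tmul, antipode_mul_antidistrib, mul_assoc]

theorem leftSandwich_one : leftSandwich k H 1 = 1 := by
  ext x
  simp [Algebra.TensorProduct.one_def]

theorem rightSandwich_one : rightSandwich k H 1 = 1 := by
  ext x
  simp [Algebra.TensorProduct.one_def]

theorem leftSandwich_apply_one (P : H ⊗[k] H) : leftSandwich k H P 1 = mulAntipodeId k H P := by
  induction P using TensorProduct.induction_on with
  | zero => simp
  | add P P' hP hP' => simp [hP, hP']
  | tmul a b => simp

theorem rightSandwich_apply_one (P : H ⊗[k] H) : rightSandwich k H P 1 = mulIdAntipode k H P := by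
  induction P using TensorProduct.induction_on with
  | zero => simp
  | add P P' hP hP' => simp [hP, hP']
  | tmul a b => simp

end Sandwich

variable (k) in
def conjAntipode (u v : H) : H →ₗ[k] H :=
  LinearMap.mulRight k v ∘ₗ LinearMap.mulLeft k u ∘ₗ antipode k

theorem mul'_map_conjAntipode_id (u v : H) (r : H ⊗[k] H) :
    LinearMap.mul' k H (map (conjAntipode k u v) LinearMap.id r) = u * leftSandwich k H r v := by
  induction r using TensorProduct.induction_on with
  | zero => simp
  | add r r' hr hr' => simp [hr, hr', mul_add]
  | tmul a b => simp [conjAntipode, mul_assoc]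

theorem mul'_map_id_conjAntipode (u v : H) (r : H ⊗[k] H) :
    LinearMap.mul' k H (map LinearMap.id (conjAntipode k u v) r) = rightSandwich k H r u * v := by
  induction r using TensorProduct.induction_on with
  | zero => simp
  | add r r' hr hr' => simp [hr, hr', add_mul]
  | tmul a b => simp [conjAntipode, mul_assoc]

theorem mul'_map_conjAntipode_id_twist {F F' : H ⊗[k] H} (hF'F : F' * F = 1) {u : H}
    (huv : u * mulAntipodeId k H F' = 1) (a : H) :
    LinearMap.mul' k H (map (conjAntipode k u (mulAntipodeId k H F')) LinearMap.id
        (F * Coalgebra.comul a * F')) = algebraMap k H (Coalgebra.counit a) := by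
  rw [← leftSandwich_apply_one] at huv ⊢
  have hv : leftSandwich k H F (leftSandwich k H F' 1) = 1 := by
    rw [← Module.End.mul_apply, ← leftSandwich_mul, hF'F, leftSandwich_one, Module.End.one_apply]
  rw [mul'_map_conjAntipode_id, leftSandwich_mul, leftSandwich_mul, Module.End.mul_apply,
    Module.End.mul_apply, hv, leftSandwich_apply_one, mulAntipodeId_comul,
    Algebra.algebraMap_eq_smul_one, map_smul, mul_smul_comm, huv]

theorem mul'_map_id_conjAntipode_twist {F F' : H ⊗[k] H} (hF'F : F' * F = 1) {v : H}
    (huv : mulIdAntipode k H F * v = 1) (a : H) :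
    LinearMap.mul' k H (map LinearMap.id (conjAntipode k (mulIdAntipode k H F) v)
        (F * Coalgebra.comul a * F')) = algebraMap k H (Coalgebra.counit a) := by
  rw [← rightSandwich_apply_one] at huv ⊢
  have hu : rightSandwich k H F' (rightSandwich k H F 1) = 1 := by
    rw [← Module.End.mul_apply, ← rightSandwich_mul, hF'F, rightSandwich_one, Module.End.one_apply]
  rw [mul'_map_id_conjAntipode, rightSandwich_mul, rightSandwich_mul, Module.End.mul_apply,
    Module.End.mul_apply, hu, rightSandwich_apply_one, mulIdAntipode_comul,
    Algebra.algebraMap_eq_smul_one, map_smul, smul_mul_assoc, huv]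

local notation "ι₁₂" => lTensor (S := k) H (includeLeft : H →ₐ[k] H ⊗[k] H)
local notation "ι₂₃" => (includeRight : H ⊗[k] H →ₐ[k] H ⊗[k] (H ⊗[k] H))
local notation "Δ₁" => AlgHom.comp (AlgEquiv.toAlgHom (Algebra.TensorProduct.assoc k k k H H H))
  (rTensor (S := k) H (Bialgebra.comulAlgHom k H))
local notation "Δ₂" => lTensor (S := k) H (Bialgebra.comulAlgHom k H)
local notation "ε₁" => AlgHom.comp (AlgEquiv.toAlgHom (Algebra.TensorProduct.lid k H))
  (rTensor (S := k) H (Bialgebra.counitAlgHom k H))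
local notation "ε₂" => AlgHom.comp (AlgEquiv.toAlgHom (Algebra.TensorProduct.rid k k H))
  (lTensor (S := k) H (Bialgebra.counitAlgHom k H))

variable (k H) in
def mulAntipodeMiddle : H ⊗[k] (H ⊗[k] H) →ₗ[k] H :=
  LinearMap.mul' k H ∘ₗ map LinearMap.id (LinearMap.mul' k H ∘ₗ map (antipode k) LinearMap.id)

variable (k H) in
def antipodeOuter : H ⊗[k] (H ⊗[k] H) →ₗ[k] H :=
  LinearMap.mul' k H ∘ₗ map (antipode k) (LinearMap.mul' k H ∘ₗ map LinearMap.id (antipode k))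

@[simp]
theorem mulAntipodeMiddle_tmul (x y z : H) :
    mulAntipodeMiddle k H (x ⊗ₜ (y ⊗ₜ z)) = x * antipode k y * z := by
  simp [mulAntipodeMiddle, mul_assoc]

@[simp]
theorem antipodeOuter_tmul (x y z : H) :
    antipodeOuter k H (x ⊗ₜ (y ⊗ₜ z)) = antipode k x * y * antipode k z := by
  simp [antipodeOuter, mul_assoc]

theorem mulAntipodeMiddle_tmul_mul_assoc (a d : H) (s t : H ⊗[k] H) :
    mulAntipodeMiddle k H ((a ⊗ₜ t) * TensorProduct.assoc k H H H (s ⊗ₜ d)) =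
      a * mulIdAntipode k H s * mulAntipodeId k H t * d := by
  induction s using TensorProduct.induction_on with
  | zero => simp
  | add s s' hs hs' => simp only [add_tmul, mul_add, add_mul, map_add, hs, hs']
  | tmul c₁ c₂ =>
    induction t using TensorProduct.induction_on with
    | zero => simp
    | add t t' ht ht' => simp only [tmul_add, add_mul, mul_add, map_add, ht, ht']
    | tmul b₁ b₂ =>
      simp [Algebra.TensorProduct.tmul_mul_tmul, antipode_mul_antidistrib, mul_assoc]

theorem antipodeOuter_assoc_mul_tmul (b c : H) (s t : H ⊗[k] H) :
    antipodeOuter k H (TensorProduct.assoc k H H H (s ⊗ₜ b) * (c ⊗ₜ t)) =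
      antipode k c * mulAntipodeId k H s * mulIdAntipode k H t * antipode k b := by
  induction s using TensorProduct.induction_on with
  | zero => simp
  | add s s' hs hs' => simp only [add_tmul, mul_add, add_mul, map_add, hs, hs']
  | tmul a₁ a₂ =>
    induction t using TensorProduct.induction_on with
    | zero => simp
    | add t t' ht ht' => simp only [tmul_add, add_mul, mul_add, map_add, ht, ht']
    | tmul d₁ d₂ =>
      simp [Algebra.TensorProduct.tmul_mul_tmul, antipode_mul_antidistrib, mul_assoc]

theorem lTensor_includeLeft_eq_assoc (P : H ⊗[k] H) :
    ι₁₂ P = TensorProduct.assoc k H H H (P ⊗ₜ (1 : H)) := by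
  induction P using TensorProduct.induction_on with
  | zero => simp
  | add P P' hP hP' => simp [add_tmul, hP, hP']
  | tmul a b => rfl

theorem mulAntipodeMiddle_includeRight_mul_lTensor_includeLeft (P Q : H ⊗[k] H) :
    mulAntipodeMiddle k H (ι₂₃ Q * ι₁₂ P) = mulIdAntipode k H P * mulAntipodeId k H Q := by
  rw [lTensor_includeLeft_eq_assoc, Algebra.TensorProduct.includeRight_apply,
    mulAntipodeMiddle_tmul_mul_assoc, one_mul, mul_one]

theorem antipodeOuter_lTensor_includeLeft_mul_includeRight (P Q : H ⊗[k] H) :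
    antipodeOuter k H (ι₁₂ Q * ι₂₃ P) = mulAntipodeId k H Q * mulIdAntipode k H P := by
  rw [lTensor_includeLeft_eq_assoc, Algebra.TensorProduct.includeRight_apply,
    antipodeOuter_assoc_mul_tmul, antipode_one, one_mul, mul_one]

theorem mulAntipodeMiddle_comul₂_mul_comul₁ (P Q : H ⊗[k] H) :
    mulAntipodeMiddle k H (Δ₂ P * Δ₁ Q) = ε₂ P * ε₁ Q := by
  induction P using TensorProduct.induction_on with
  | zero => simp
  | add P P' hP hP' => simp only [map_add, add_mul, hP, hP']
  | tmul a b =>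
    induction Q using TensorProduct.induction_on with
    | zero => simp
    | add Q Q' hQ hQ' => simp only [map_add, mul_add, hQ, hQ']
    | tmul c d =>
      have hΔ₂ : Δ₂ (a ⊗ₜ b) = a ⊗ₜ Coalgebra.comul b := rfl
      have hΔ₁ : Δ₁ (c ⊗ₜ d) = TensorProduct.assoc k H H H (Coalgebra.comul c ⊗ₜ d) := rfl
      have hε : ε₂ (a ⊗ₜ b) * ε₁ (c ⊗ₜ d) =
          Coalgebra.counit (R := k) b • a * Coalgebra.counit (R := k) c • d := by
        simp [Algebra.TensorProduct.lTensor, Algebra.TensorProduct.rTensor]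
      rw [hΔ₂, hΔ₁, mulAntipodeMiddle_tmul_mul_assoc, mulIdAntipode_comul, mulAntipodeId_comul,
        hε, Algebra.algebraMap_eq_smul_one, Algebra.algebraMap_eq_smul_one]
      simp only [mul_smul_comm, smul_mul_assoc, mul_one, smul_smul, mul_comm]

theorem antipodeOuter_comul₁_mul_comul₂ (P Q : H ⊗[k] H) :
    antipodeOuter k H (Δ₁ P * Δ₂ Q) = antipode k (ε₂ Q) * antipode k (ε₁ P) := by
  induction P using TensorProduct.induction_on with
  | zero => simp
  | add P P' hP hP' => simp only [map_add, add_mul, mul_add, hP, hP']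
  | tmul a b =>
    induction Q using TensorProduct.induction_on with
    | zero => simp
    | add Q Q' hQ hQ' => simp only [map_add, mul_add, add_mul, hQ, hQ']
    | tmul c d =>
      have hΔ₁ : Δ₁ (a ⊗ₜ b) = TensorProduct.assoc k H H H (Coalgebra.comul a ⊗ₜ b) := rfl
      have hΔ₂ : Δ₂ (c ⊗ₜ d) = c ⊗ₜ Coalgebra.comul d := rfl
      have hε : antipode k (ε₂ (c ⊗ₜ d)) * antipode k (ε₁ (a ⊗ₜ b)) =
          Coalgebra.counit (R := k) d • antipode k c *
            Coalgebra.counit (R := k) a • antipode k b := by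
        simp [Algebra.TensorProduct.lTensor, Algebra.TensorProduct.rTensor]
      rw [hΔ₁, hΔ₂, antipodeOuter_assoc_mul_tmul, mulAntipodeId_comul, mulIdAntipode_comul,
        hε, Algebra.algebraMap_eq_smul_one, Algebra.algebraMap_eq_smul_one]
      simp only [mul_smul_comm, smul_mul_assoc, mul_one, smul_smul, mul_comm]

theorem inv_mul_eq_mul_inv_of_mul_eq_mul {M : Type*} [Monoid M] {a b c d b' c' : M}
    (h : a * b = c * d) (hb : b * b' = 1) (hc : c' * c = 1) : c' * a = d * b' :=
  calc c' * a = c' * (a * b) * b' := by rw [mul_assoc c', mul_assoc a, hb, mul_one]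
    _ = d * b' := by rw [h, ← mul_assoc, hc, one_mul]

theorem mulIdAntipode_mul_mulAntipodeId {F F' : H ⊗[k] H} (hFF' : F * F' = 1) (hF'F : F' * F = 1)
    (hcoc : ι₁₂ F * Δ₁ F = ι₂₃ F * Δ₂ F) (hε₁ : ε₁ F = 1) (hε₂ : ε₂ F = 1) :
    mulIdAntipode k H F * mulAntipodeId k H F' = 1 := by
  have hcoc' : ι₂₃ F' * ι₁₂ F = Δ₂ F * Δ₁ F' :=
    inv_mul_eq_mul_inv_of_mul_eq_mul hcoc (by rw [← map_mul, hFF', map_one])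
      (by rw [← map_mul, hF'F, map_one])
  have hε₁' : ε₁ F' = 1 :=
    left_inv_eq_right_inv (by rw [← map_mul, hF'F, map_one]) (by rw [hε₁, mul_one])
  rw [← mulAntipodeMiddle_includeRight_mul_lTensor_includeLeft, hcoc',
    mulAntipodeMiddle_comul₂_mul_comul₁, hε₂, hε₁', one_mul]

theorem mulAntipodeId_mul_mulIdAntipode {F F' : H ⊗[k] H} (hFF' : F * F' = 1) (hF'F : F' * F = 1)
    (hcoc : ι₁₂ F * Δ₁ F = ι₂₃ F * Δ₂ F) (hε₁ : ε₁ F = 1) (hε₂ : ε₂ F = 1) :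
    mulAntipodeId k H F' * mulIdAntipode k H F = 1 := by
  have hcoc' : ι₁₂ F' * ι₂₃ F = Δ₁ F * Δ₂ F' :=
    inv_mul_eq_mul_inv_of_mul_eq_mul hcoc.symm (by rw [← map_mul, hFF', map_one])
      (by rw [← map_mul, hF'F, map_one])
  have hε₂' : ε₂ F' = 1 :=
    left_inv_eq_right_inv (by rw [← map_mul, hF'F, map_one]) (by rw [hε₂, mul_one])
  rw [← antipodeOuter_lTensor_includeLeft_mul_includeRight, hcoc',
    antipodeOuter_comul₁_mul_comul₂, hε₁, hε₂', antipode_one, one_mul]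

end

end DrinfeldTwist

/-- Drinfeld's twisting of the antipode: Let `F` be an invertible twist of a
Hopf algebra `H` (cocycle + counit conditions) with inverse `F⁻¹`, and let
`u = Σ f⁽¹⁾ S(f⁽²⁾)` (i.e. `u = m((id ⊗ S)(F))`).  Then `u` is invertible, with inverse
`v = m((S ⊗ id)(F⁻¹)) = Σ S(g⁽¹⁾) g⁽²⁾`, and `S^{(F)}(a) = u S(a) u⁻¹` is an antipode for
the twisted coproduct `Δ^{(F)}(a) = F Δ(a) F⁻¹`. -/
theorem twisted_antipode {k : Type*} [Field k] {H : Type*} [Ring H] [HopfAlgebra k H]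
    (F Finv : H ⊗[k] H) (hinv : F * Finv = 1 ∧ Finv * F = 1) :
    let e12 : H ⊗[k] H →ₗ[k] H ⊗[k] (H ⊗[k] H) :=
      TensorProduct.map LinearMap.id ((TensorProduct.mk k H H).flip 1)
    let e23 : H ⊗[k] H →ₗ[k] H ⊗[k] (H ⊗[k] H) := TensorProduct.mk k H (H ⊗[k] H) 1
    let Δ₀ : H →ₗ[k] H ⊗[k] H := Coalgebra.comul
    let ε : H →ₗ[k] k := Coalgebra.counit
    let S : H →ₗ[k] H := HopfAlgebra.antipode k
    let E1 : H ⊗[k] H →ₗ[k] H :=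
      (TensorProduct.lid k H).toLinearMap ∘ₗ TensorProduct.map ε LinearMap.id
    let E2 : H ⊗[k] H →ₗ[k] H :=
      (TensorProduct.rid k H).toLinearMap ∘ₗ TensorProduct.map LinearMap.id ε
    -- u = Σ f⁽¹⁾ S(f⁽²⁾) and its claimed inverse v = Σ S(g⁽¹⁾) g⁽²⁾
    let u : H := LinearMap.mul' k H (TensorProduct.map LinearMap.id S F)
    let v : H := LinearMap.mul' k H (TensorProduct.map S LinearMap.id Finv)
    -- twisted coproduct and antipode
    let ΔF : H →ₗ[k] H ⊗[k] H :=
      LinearMap.mulRight k Finv ∘ₗ LinearMap.mulLeft k F ∘ₗ Δ₀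
    let SF : H →ₗ[k] H := LinearMap.mulRight k v ∘ₗ LinearMap.mulLeft k u ∘ₗ S
    -- cocycle equation for F
    e12 F * ((TensorProduct.assoc k H H H).toLinearMap
        (TensorProduct.map Δ₀ LinearMap.id F)) =
      e23 F * TensorProduct.map LinearMap.id Δ₀ F →
    -- counit normalization for F
    (E1 F = 1 ∧ E2 F = 1) →
    -- conclusions: u is invertible (with inverse v), and S^{(F)} is an antipode for Δ^{(F)}
    (u * v = 1 ∧ v * u = 1) ∧
      (∀ a : H,
        LinearMap.mul' k H (TensorProduct.map SF LinearMap.id (ΔF a)) =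
          algebraMap k H (ε a) ∧
        LinearMap.mul' k H (TensorProduct.map LinearMap.id SF (ΔF a)) =
          algebraMap k H (ε a)) := by
  intro e12 e23 Δ₀ ε S E1 E2 u v ΔF SF hcoc hcu
  have huv : u * v = 1 :=
    DrinfeldTwist.mulIdAntipode_mul_mulAntipodeId hinv.1 hinv.2 hcoc hcu.1 hcu.2
  have hvu : v * u = 1 :=
    DrinfeldTwist.mulAntipodeId_mul_mulIdAntipode hinv.1 hinv.2 hcoc hcu.1 hcu.2
  exact ⟨⟨huv, hvu⟩, fun a =>
    ⟨DrinfeldTwist.mul'_map_conjAntipode_id_twist hinv.2 huv a,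
      DrinfeldTwist.mul'_map_id_conjAntipode_twist hinv.2 huv a⟩⟩
end
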